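/- arXiv:1607.00300 — 9 statements merged into one kernel-verified Lean document; each statement's English description precedes it below -/
import Mathlib

section
/- Let n be a finite-dimensional 2-step nilpotent Lie algebra over a field k of characteristic zero, with center z and a fixed linear complement W, so that n = W ⊕ z and Λ²n = Λ²W ⊕ (W∧z) ⊕ Λ²z. Then every n-invariant element ω ∈ (Λ²n)^n has zero component in Λ²W; that is, (Λ²n)^n ⊆ W∧z ⊕ Λ²z. -/
open TensorProduct

/-- The adjoint action of a Lie algebra `g` on `g ⊗ g`, determined by
`x · (a ⊗ b) = ⁅x,a⁆ ⊗ b + a ⊗ ⁅x,b⁆`. -/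
noncomputable def tAct (k g : Type*) [CommRing k] [LieRing g] [LieAlgebra k g] (x : g) :
    g ⊗[k] g →ₗ[k] g ⊗[k] g :=
  TensorProduct.map (LieAlgebra.ad k g x) LinearMap.id
    + TensorProduct.map LinearMap.id (LieAlgebra.ad k g x)

/-- For submodules `P Q ⊆ g`, the image of `P ⊗ Q` in `g ⊗ g`. -/
noncomputable def tsub (k g : Type*) [CommRing k] [AddCommGroup g] [Module k g]
    (P Q : Submodule k g) : Submodule k (g ⊗[k] g) :=
  LinearMap.range (TensorProduct.map P.subtype Q.subtype)

/-!
Let `P` and `Q = 1 - P` be the projections onto `z` along `W` and onto `W` along `z`; the `Λ²W`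
component of `ω` is `(Q ⊗ Q) ω`. Since `ad x` takes values in `z` and kills `z`, we have
`P ∘ ad x = ad x = ad x ∘ Q` and `Q ∘ ad x = 0`, so applying `P ⊗ Q` to `x · ω = 0` gives
`(ad x ⊗ 1) (Q ⊗ Q) ω = 0` for every `x`. Expanding `(Q ⊗ Q) ω` in a basis of the second factor,
its coefficients lie in `W` and are central, hence vanish.
-/

open LinearMap Submodule

namespace TensorProduct

variable {R M M' N : Type*} [CommRing R] [AddCommGroup M] [Module R M] [AddCommGroup M']
  [Module R M'] [AddCommGroup N] [Module R N]

lemma equivFinsuppOfBasisRight_rTensor {κ : Type*} [DecidableEq κ] (𝒞 : Module.Basis κ R N)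
    (f : M →ₗ[R] M') (t : M ⊗[R] N) (i : κ) :
    equivFinsuppOfBasisRight 𝒞 (f.rTensor N t) i = f (equivFinsuppOfBasisRight 𝒞 t i) := by
  induction t <;> simp_all

lemma eq_zero_of_forall_rTensor_eq_zero [Module.Free R N] {ι : Type*} {f : ι → M →ₗ[R] M'}
    (hf : ∀ m, (∀ i, f i m = 0) → m = 0) {t : M ⊗[R] N} (ht : ∀ i, (f i).rTensor N t = 0) :
    t = 0 := by
  classical
  apply (equivFinsuppOfBasisRight (Module.Free.chooseBasis R N)).injective
  ext j
  rw [map_zero, Finsupp.coe_zero, Pi.zero_apply]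
  exact hf _ fun i => by
    rw [← equivFinsuppOfBasisRight_rTensor, ht i, map_zero, Finsupp.coe_zero, Pi.zero_apply]

end TensorProduct

section Decomposition

variable {R E F G : Type*} [CommRing R] [AddCommGroup E] [Module R E] [AddCommGroup F]
  [Module R F] [AddCommGroup G] [Module R G]

lemma map_subtype_comp_mem_tsub {U V : Submodule R E} (f : F →ₗ[R] U) (g : G →ₗ[R] V)
    (t : F ⊗[R] G) : map (U.subtype ∘ₗ f) (V.subtype ∘ₗ g) t ∈ tsub R E U V := by
  rw [TensorProduct.map_comp]
  exact mem_range_self _ _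

lemma mem_tsub_sup_of_map_projection_eq_zero {U V : Submodule R E} (h : IsCompl U V)
    {t : E ⊗[R] E} (ht : map (V.projection U h.symm) (V.projection U h.symm) t = 0) :
    t ∈ tsub R E V U ⊔ tsub R E U V ⊔ tsub R E U U := by
  set p := U.projection V h
  set q := V.projection U h.symm
  have hdecomp : t = map q p t + map p q t + map p p t := by
    have hid : p + q = LinearMap.id := projection_add_projection_eq_id h
    conv_lhs => rw [← LinearMap.id_apply (R := R) t, ← TensorProduct.map_id, ← hid]
    simp only [map_add_left, map_add_right, LinearMap.add_apply]
    rw [ht]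
    abel
  rw [hdecomp]
  exact add_mem (add_mem (mem_sup_left (mem_sup_left (map_subtype_comp_mem_tsub _ _ t)))
    (mem_sup_left (mem_sup_right (map_subtype_comp_mem_tsub _ _ t))))
    (mem_sup_right (map_subtype_comp_mem_tsub _ _ t))

end Decomposition

section TwoStep

open LieAlgebra

variable {k L : Type*} [CommRing k] [LieRing L] [LieAlgebra k L] {W : Submodule k L}
  (hW : IsCompl (center k L).toSubmodule W)

lemma ad_comp_projection_compl (x : L) :
    ad k L x ∘ₗ W.projection _ hW.symm = ad k L x := by
  ext a
  have hcentral : ⁅x, (center k L).toSubmodule.projection W hW a⁆ = 0 :=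
    (LieModule.mem_maxTrivSubmodule k L L _).mp (projection_apply_mem hW a) x
  rw [LinearMap.comp_apply, projection_eq_self_sub_projection hW, map_sub]
  simp [hcentral]

variable (h2step : ∀ x y : L, ⁅x, y⁆ ∈ center k L)
include h2step

lemma map_projection_tAct (x : L) (ω : L ⊗[k] L) :
    map ((center k L).toSubmodule.projection W hW) (W.projection _ hW.symm) (tAct k L x ω)
      = map (ad k L x) (W.projection _ hW.symm) ω := by
  have hP : (center k L).toSubmodule.projection W hW ∘ₗ ad k L x = ad k L x :=
    LinearMap.ext fun a => projection_apply_of_mem_left hW (h2step x a)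
  have hQ : W.projection _ hW.symm ∘ₗ ad k L x = 0 :=
    LinearMap.ext fun a => projection_apply_of_mem_right hW.symm (h2step x a)
  rw [tAct, LinearMap.add_apply, map_add, ← LinearMap.comp_apply, ← TensorProduct.map_comp,
    ← LinearMap.comp_apply (map _ _), ← TensorProduct.map_comp, hP, hQ, LinearMap.comp_id,
    map_zero_right, LinearMap.zero_apply, add_zero]

lemma map_projection_compl_eq_zero_of_invariant [Module.Free k L] {ω : L ⊗[k] L}
    (hinv : ∀ x : L, tAct k L x ω = 0) :
    map (W.projection _ hW.symm) (W.projection _ hW.symm) ω = 0 := by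
  set Q := W.projection _ hW.symm
  have hfaithful : ∀ w : W, (∀ x : L, (ad k L x ∘ₗ W.subtype) w = 0) → w = 0 := by
    intro w hw
    have hmem : (w : L) ∈ (center k L).toSubmodule ⊓ W :=
      ⟨(LieModule.mem_maxTrivSubmodule k L L _).mpr hw, w.2⟩
    rw [hW.inf_eq_bot, Submodule.mem_bot] at hmem
    exact Subtype.ext hmem
  have hcomponent : map (W.projectionOnto _ hW.symm) Q ω = 0 := by
    refine TensorProduct.eq_zero_of_forall_rTensor_eq_zero hfaithful fun x => ?_
    rw [← LinearMap.comp_apply, rTensor_comp_map, LinearMap.comp_assoc]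
    change map (ad k L x ∘ₗ Q) Q ω = 0
    rw [ad_comp_projection_compl hW, ← map_projection_tAct hW h2step, hinv, map_zero]
  have := congrArg (W.subtype.rTensor L) hcomponent
  rwa [map_zero, ← LinearMap.comp_apply, rTensor_comp_map] at this

end TwoStep

theorem stmt2_general (k n : Type*) [Field k] [LieRing n] [LieAlgebra k n]
    (h2step : ∀ x y : n, ⁅x, y⁆ ∈ LieAlgebra.center k n)
    (W : Submodule k n)
    (hcompl : IsCompl (LieAlgebra.center k n).toSubmodule W) :
    ∀ ω : n ⊗[k] n, TensorProduct.comm k n n ω = -ω → (∀ x : n, tAct k n x ω = 0) →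
      ω ∈ tsub k n W (LieAlgebra.center k n).toSubmodule
          ⊔ tsub k n (LieAlgebra.center k n).toSubmodule W
          ⊔ tsub k n (LieAlgebra.center k n).toSubmodule (LieAlgebra.center k n).toSubmodule :=
  fun _ _ hinv => mem_tsub_sup_of_map_projection_eq_zero hcompl
    (map_projection_compl_eq_zero_of_invariant hcompl h2step hinv)

/-- for a finite-dimensional 2-step nilpotent Lie algebra `n` with center `z`
and a fixed linear complement `W`, every invariant element of `Λ²n` (modelled as an
antisymmetric invariant tensor `ω ∈ n ⊗ n`) has zero component in `Λ²W`, i.e. lies in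
`W∧z ⊕ Λ²z` (modelled as `W⊗z + z⊗W + z⊗z`). -/
theorem stmt2 (k n : Type*) [Field k] [CharZero k] [LieRing n] [LieAlgebra k n]
    [FiniteDimensional k n]
    (h2step : ∀ x y : n, ⁅x, y⁆ ∈ LieAlgebra.center k n)
    (W : Submodule k n)
    (hcompl : IsCompl (LieAlgebra.center k n).toSubmodule W) :
    ∀ ω : n ⊗[k] n, TensorProduct.comm k n n ω = -ω → (∀ x : n, tAct k n x ω = 0) →
      ω ∈ tsub k n W (LieAlgebra.center k n).toSubmodule
          ⊔ tsub k n (LieAlgebra.center k n).toSubmodule W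
          ⊔ tsub k n (LieAlgebra.center k n).toSubmodule (LieAlgebra.center k n).toSubmodule :=
  stmt2_general k n h2step W hcompl
end

section
/- Let (n,δ) be a finite-dimensional 2-step nilpotent Lie bialgebra over a field k of characteristic zero, with center z and a fixed linear complement W so that n = W ⊕ z. Let δ₁ : W → Λ²W be the composition of δ restricted to W with the projection of Λ²n = Λ²W ⊕ (W∧z) ⊕ Λ²z onto Λ²W. Then δ₁ satisfies the co-Jacobi identity, i.e. δ₁ is a Lie coalgebra structure on W: writing δ₁(v) = v₁∧v₂ (sum understood), δ₁(v₁)∧v₂ − v₁∧δ₁(v₂) = 0 in Λ³W for all v ∈ W. -/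
open TensorProduct

/-- The cyclic rotation `(a⊗b)⊗c ↦ (c⊗a)⊗b` on `(g⊗g)⊗g`. -/
noncomputable def tCyc (k g : Type*) [CommRing k] [AddCommGroup g] [Module k g] :
    (g ⊗[k] g) ⊗[k] g →ₗ[k] (g ⊗[k] g) ⊗[k] g :=
  ((TensorProduct.assoc k g g g).symm.toLinearMap).comp
    (TensorProduct.comm k (g ⊗[k] g) g).toLinearMap

/-!
Let `p_W`, `p_z` be the projections of `n = W ⊕ z`. For central `c`, the cocycle identity
gives `x · δ c = δ ⁅x, c⁆ + c · δ x = 0` for all `x`. Applying `p_W ⊗ p_z` and using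
`⁅n, n⁆ ⊆ z`, this says that every contraction of the `W ⊗ W`-component of `δ c` is
central; lying in `W`, it vanishes. So `δ c` has no `Λ²W`-part, and with
`P = p_W ⊗ p_W ⊗ p_W`, `P ((δ ⊗ id) (δ v)) = (δ₁ ⊗ id) (δ₁ v)` for `v ∈ W`.
As `P` commutes with the cyclic rotation, co-Jacobi for `δ₁` is the image under `P` of
co-Jacobi for `δ`.
-/

namespace TensorProduct

variable {k V M N : Type*} [CommRing k] [AddCommGroup V] [Module k V]
  [AddCommGroup M] [Module k M] [AddCommGroup N] [Module k N]

theorem eq_zero_of_forall_lid_rTensor_eq_zero [Module.Free k V] (t : V ⊗[k] M)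
    (h : ∀ f : Module.Dual k V, TensorProduct.lid k M (f.rTensor M t) = 0) : t = 0 := by
  let b := Module.Free.chooseBasis k V
  apply (equivFinsuppOfBasisLeft b).injective
  ext i
  simpa [equivFinsuppOfBasisLeft_apply] using h (b.coord i)

theorem lid_rTensor_lTensor (f : Module.Dual k V) (g : M →ₗ[k] N) (t : V ⊗[k] M) :
    TensorProduct.lid k N (f.rTensor N (g.lTensor V t)) =
      g (TensorProduct.lid k M (f.rTensor M t)) := by
  induction t using TensorProduct.induction_on with
  | zero => simp
  | tmul a b => simp
  | add s t hs ht => simp only [map_add, hs, ht]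

end TensorProduct

section

variable {k M N N' : Type*} [CommRing k] [AddCommGroup M] [Module k M]
  [AddCommGroup N] [Module k N] [AddCommGroup N'] [Module k N']

theorem map_eq_map_of_mem_tsub {P Q : Submodule k M} {f f' : M →ₗ[k] N}
    {g g' : M →ₗ[k] N'} (hf : ∀ a ∈ P, f a = f' a) (hg : ∀ b ∈ Q, g b = g' b)
    {t : M ⊗[k] M} (ht : t ∈ tsub k M P Q) : map f g t = map f' g' t := by
  obtain ⟨u, rfl⟩ := ht
  simp only [map_map]
  congr 2 <;> ext ⟨x, hx⟩
  · exact hf x hx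
  · exact hg x hx

theorem map_apply_eq_of_sub_mem_tsub {W Z : Submodule k M} {f f' : M →ₗ[k] N}
    {g g' : M →ₗ[k] N'} (hfZ : ∀ z ∈ Z, f z = 0) (hgZ : ∀ z ∈ Z, g z = 0)
    (hfW : ∀ w ∈ W, f w = f' w) (hgW : ∀ w ∈ W, g w = g' w) {t t₁ : M ⊗[k] M}
    (ht₁ : t₁ ∈ tsub k M W W)
    (ht : t - t₁ ∈ tsub k M W Z ⊔ tsub k M Z W ⊔ tsub k M Z Z) :
    map f g t = map f' g' t₁ := by
  have hker : tsub k M W Z ⊔ tsub k M Z W ⊔ tsub k M Z Z ≤ LinearMap.ker (map f g) := by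
    refine sup_le (sup_le ?_ ?_) ?_ <;> intro s hs <;> rw [LinearMap.mem_ker]
    · rw [map_eq_map_of_mem_tsub (g' := 0) (fun _ _ ↦ rfl) hgZ hs, map_zero_right,
        LinearMap.zero_apply]
    all_goals rw [map_eq_map_of_mem_tsub (f' := 0) hfZ (fun _ _ ↦ rfl) hs, map_zero_left,
      LinearMap.zero_apply]
  rw [← sub_add_cancel t t₁, map_add, hker ht, zero_add, map_eq_map_of_mem_tsub hfW hgW ht₁]

theorem map_map_tCyc (f : M →ₗ[k] N) (t : (M ⊗[k] M) ⊗[k] M) :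
    map (map f f) f (tCyc k M t) = tCyc k N (map (map f f) f t) := by
  suffices map (map f f) f ∘ₗ tCyc k M = tCyc k N ∘ₗ map (map f f) f from
    congr($this t)
  ext a b c
  simp [tCyc]

end

section LieAlgebra

open LieAlgebra

variable {k n : Type*} [CommRing k] [LieRing n] [LieAlgebra k n]

theorem tAct_eq_zero_of_mem_center {z : n} (hz : z ∈ center k n) : tAct k n z = 0 := by
  have had : ad k n z = 0 := by
    ext y
    rw [ad_apply, ← lie_skew, (LieModule.mem_maxTrivSubmodule k n n z).mp hz y, neg_zero]
    rfl
  simp [tAct, had]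

theorem tAct_apply_cobracket_eq_zero_of_mem_center {δ : n →ₗ[k] n ⊗[k] n}
    (hcoc : ∀ x y, δ ⁅x, y⁆ = tAct k n x (δ y) - tAct k n y (δ x)) {z : n}
    (hz : z ∈ center k n) (x : n) : tAct k n x (δ z) = 0 := by
  have := hcoc x z
  rwa [(LieModule.mem_maxTrivSubmodule k n n z).mp hz x, map_zero, tAct_eq_zero_of_mem_center hz,
    LinearMap.zero_apply, sub_zero, eq_comm] at this

variable {W : Submodule k n} (hW : IsCompl (center k n).toSubmodule W)

theorem lTensor_ad_map_projection (h2step : ∀ x y : n, ⁅x, y⁆ ∈ center k n) (x : n)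
    (t : n ⊗[k] n) :
    (ad k n x).lTensor n (map (W.projection _ hW.symm) (W.projection _ hW.symm) t) =
      map (W.projection _ hW.symm) (Submodule.projection _ W hW) (tAct k n x t) := by
  induction t using TensorProduct.induction_on with
  | zero => simp
  | tmul a b =>
    have hcentral : ⁅x, Submodule.projection _ W hW b⁆ = 0 :=
      (LieModule.mem_maxTrivSubmodule k n n _).mp (Submodule.projection_apply_mem hW b) x
    have hb : ⁅x, W.projection _ hW.symm b⁆ = ⁅x, b⁆ := by
      conv_rhs => rw [← Submodule.projection_add_projection_eq_self hW.symm b]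
      rw [lie_add, hcentral, add_zero]
    simp [tAct, hb, Submodule.projection_apply_of_mem_right hW.symm (h2step x a),
      Submodule.projection_apply_of_mem_left hW (h2step x b)]
  | add s t hs ht => simp only [map_add, hs, ht]

theorem map_projection_cobracket_eq_zero_of_mem_center [Module.Free k n]
    (h2step : ∀ x y : n, ⁅x, y⁆ ∈ center k n) {δ : n →ₗ[k] n ⊗[k] n}
    (hcoc : ∀ x y, δ ⁅x, y⁆ = tAct k n x (δ y) - tAct k n y (δ x)) {z : n}
    (hz : z ∈ center k n) :
    map (W.projection _ hW.symm) (W.projection _ hW.symm) (δ z) = 0 := by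
  refine eq_zero_of_forall_lid_rTensor_eq_zero _ fun f ↦ ?_
  set v := TensorProduct.lid k n (f.rTensor n (map (W.projection _ hW.symm)
    (W.projection _ hW.symm) (δ z)))
  have hvW : v ∈ W := by
    simp only [v, ← LinearMap.lTensor_comp_rTensor, LinearMap.comp_apply, lid_rTensor_lTensor]
    exact Submodule.projection_apply_mem _ _
  have hvZ : v ∈ center k n := by
    refine (LieModule.mem_maxTrivSubmodule k n n v).mpr fun x ↦ ?_
    rw [← ad_apply (R := k), ← lid_rTensor_lTensor, lTensor_ad_map_projection hW h2step,
      tAct_apply_cobracket_eq_zero_of_mem_center hcoc hz, map_zero, map_zero, map_zero]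
  exact Submodule.disjoint_def.mp hW.disjoint v hvZ hvW

end LieAlgebra

theorem stmt3_general (k n : Type*) [Field k] [LieRing n] [LieAlgebra k n]
    (h2step : ∀ x y : n, ⁅x, y⁆ ∈ LieAlgebra.center k n)
    (W : Submodule k n)
    (hcompl : IsCompl (LieAlgebra.center k n).toSubmodule W)
    (δ : n →ₗ[k] n ⊗[k] n)
    -- δ is a Lie bialgebra structure:
    (hcoJ : ∀ x, (TensorProduct.map δ LinearMap.id) (δ x)
        + tCyc k n ((TensorProduct.map δ LinearMap.id) (δ x))
        + tCyc k n (tCyc k n ((TensorProduct.map δ LinearMap.id) (δ x))) = 0)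
    (hcoc : ∀ x y, δ ⁅x, y⁆ = tAct k n x (δ y) - tAct k n y (δ x))
    -- δ₁ is the Λ²W-component of δ on W:
    (δ₁ : n →ₗ[k] n ⊗[k] n)
    (hδ₁W : ∀ v ∈ W, δ₁ v ∈ tsub k n W W)
    (hδ₁comp : ∀ v ∈ W, δ v - δ₁ v ∈
      tsub k n W (LieAlgebra.center k n).toSubmodule
        ⊔ tsub k n (LieAlgebra.center k n).toSubmodule W
        ⊔ tsub k n (LieAlgebra.center k n).toSubmodule (LieAlgebra.center k n).toSubmodule) :
    -- conclusion: δ₁ satisfies co-Jacobi on W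
    ∀ v ∈ W, (TensorProduct.map δ₁ LinearMap.id) (δ₁ v)
        + tCyc k n ((TensorProduct.map δ₁ LinearMap.id) (δ₁ v))
        + tCyc k n (tCyc k n ((TensorProduct.map δ₁ LinearMap.id) (δ₁ v))) = 0 := by
  intro v hv
  set p := W.projection _ hcompl.symm
  have hpW : ∀ w ∈ W, p w = w := fun w hw ↦ Submodule.projection_apply_of_mem_left _ hw
  have hpZ : ∀ z ∈ (LieAlgebra.center k n).toSubmodule, p z = 0 :=
    fun z hz ↦ Submodule.projection_apply_of_mem_right _ hz
  have hδ₁ : ∀ w ∈ W, map p p (δ w) = δ₁ w := fun w hw ↦ by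
    simpa using map_apply_eq_of_sub_mem_tsub (f' := .id) (g' := .id) hpZ hpZ hpW hpW
      (hδ₁W w hw) (hδ₁comp w hw)
  have hproj : map (map p p) p (map δ .id (δ v)) = map δ₁ .id (δ₁ v) := by
    rw [map_map, LinearMap.comp_id]
    exact map_apply_eq_of_sub_mem_tsub
      (fun z hz ↦ map_projection_cobracket_eq_zero_of_mem_center hcompl h2step hcoc hz)
      hpZ hδ₁ hpW (hδ₁W v hv) (hδ₁comp v hv)
  rw [← hproj, ← map_map_tCyc, ← map_map_tCyc, ← map_add, ← map_add, hcoJ v, map_zero]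

/-- for a finite-dimensional 2-step nilpotent Lie bialgebra `(n,δ)` with center
`z` and complement `W`, the `Λ²W`-component `δ₁` of `δ|_W` satisfies co-Jacobi, i.e. is a
Lie coalgebra structure on `W`.  Cobrackets with values in `Λ²` are modelled as
antisymmetric-tensor-valued maps, and the co-Jacobi identity
`δ₁(v₁)∧v₂ − v₁∧δ₁(v₂) = 0 ∈ Λ³W` is expressed in its equivalent tensor form
`(1 + ξ + ξ²)(δ₁ ⊗ id)δ₁ = 0` (`ξ` the cyclic rotation). -/
theorem stmt3 (k n : Type*) [Field k] [CharZero k] [LieRing n] [LieAlgebra k n]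
    [FiniteDimensional k n]
    (h2step : ∀ x y : n, ⁅x, y⁆ ∈ LieAlgebra.center k n)
    (W : Submodule k n)
    (hcompl : IsCompl (LieAlgebra.center k n).toSubmodule W)
    (δ : n →ₗ[k] n ⊗[k] n)
    -- δ is a Lie bialgebra structure:
    (hanti : ∀ x, TensorProduct.comm k n n (δ x) = - δ x)
    (hcoJ : ∀ x, (TensorProduct.map δ LinearMap.id) (δ x)
        + tCyc k n ((TensorProduct.map δ LinearMap.id) (δ x))
        + tCyc k n (tCyc k n ((TensorProduct.map δ LinearMap.id) (δ x))) = 0)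
    (hcoc : ∀ x y, δ ⁅x, y⁆ = tAct k n x (δ y) - tAct k n y (δ x))
    -- δ₁ is the Λ²W-component of δ on W:
    (δ₁ : n →ₗ[k] n ⊗[k] n)
    (hδ₁W : ∀ v ∈ W, δ₁ v ∈ tsub k n W W)
    (hδ₁anti : ∀ v ∈ W, TensorProduct.comm k n n (δ₁ v) = - δ₁ v)
    (hδ₁comp : ∀ v ∈ W, δ v - δ₁ v ∈
      tsub k n W (LieAlgebra.center k n).toSubmodule
        ⊔ tsub k n (LieAlgebra.center k n).toSubmodule W
        ⊔ tsub k n (LieAlgebra.center k n).toSubmodule (LieAlgebra.center k n).toSubmodule) :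
    -- conclusion: δ₁ satisfies co-Jacobi on W
    ∀ v ∈ W, (TensorProduct.map δ₁ LinearMap.id) (δ₁ v)
        + tCyc k n ((TensorProduct.map δ₁ LinearMap.id) (δ₁ v))
        + tCyc k n (tCyc k n ((TensorProduct.map δ₁ LinearMap.id) (δ₁ v))) = 0 :=
  stmt3_general k n h2step W hcompl δ hcoJ hcoc δ₁ hδ₁W hδ₁comp
end

section
/- Let (n,δ) be a finite-dimensional 2-step nilpotent Lie bialgebra over a field k of characteristic zero, with center z, linear complement W, basis {z_i} of z and basis {λ_j} of W*. Define antisymmetric maps T_i : W → W* by [v,w] = Σ_i T_i(v)(w) z_i for v,w ∈ W, and antisymmetric maps S_j : W* → W from the transpose [·,·]* of the Λ²W-component δ₁ of δ|_W via [λ,μ]* = Σ_j S_j(μ)(λ) λ_j. If moreover δ(z) ⊆ Λ²z, then T_i S_j T_k + T_k S_j T_i = 0 as maps W → W* for all indices i, j, k. -/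
open TensorProduct

/-- Evaluation of `f ⊗ h` on `M ⊗ M`: `a ⊗ b ↦ f(a) * h(b)`. -/
noncomputable def pairT (k M : Type*) [CommRing k] [AddCommGroup M] [Module k M]
    (f h : Module.Dual k M) : M ⊗[k] M →ₗ[k] k :=
  (TensorProduct.lid k k).toLinearMap.comp (TensorProduct.map f h)

/-!
Fix `i`, pair the cocycle identity `δ⁅v, w⁆ = v · δ w - w · δ v` (`v, w ∈ W`) with `ξ ⊗ μ`, where
`ξ` is the `i`-th coordinate on `z` extended by zero on `W` and `μ ∈ W*` is extended by zero on `z`.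
The left side vanishes since `⁅v, w⁆ ∈ z` and `δ(z) ⊆ z ⊗ z`; on the right, `μ` kills brackets and
`ξ ∘ ad v` kills `z`, so only `δ₁` survives and `[T_i v, μ]*(w)` is symmetric in `v, w`. The form
`([T_i u, T_k v]* + [T_k u, T_i v]*)(w)` is then symmetric in `(u, w)` and, `[·,·]*` being
antisymmetric, antisymmetric in `(u, v)`; in characteristic `≠ 2` it vanishes, and its
`λ_j`-coordinates are the entries of `T_i S_j T_k + T_k S_j T_i`.
-/

section Pairing

variable {k M N : Type*} [CommRing k] [AddCommGroup M] [Module k M] [AddCommGroup N] [Module k N]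

@[simp]
theorem pairT_tmul (f h : Module.Dual k M) (a b : M) : pairT k M f h (a ⊗ₜ b) = f a * h b := by
  simp [pairT]

theorem pairT_comm (f h : Module.Dual k M) (t : M ⊗[k] M) :
    pairT k M f h (TensorProduct.comm k M M t) = pairT k M h f t := by
  induction t using TensorProduct.induction_on with
  | zero => simp
  | tmul a b => simp [mul_comm]
  | add s t hs ht => simp only [map_add, hs, ht]

theorem pairT_map (p : M →ₗ[k] N) (f h : Module.Dual k N) (t : M ⊗[k] M) :
    pairT k N f h (TensorProduct.map p p t) = pairT k M (f ∘ₗ p) (h ∘ₗ p) t := by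
  induction t using TensorProduct.induction_on with
  | zero => simp
  | tmul a b => simp
  | add s t hs ht => simp only [map_add, hs, ht]

theorem tsub_le_ker_pairT_of_left {P : Submodule k M} {f : Module.Dual k M}
    (hf : ∀ x ∈ P, f x = 0) (Q : Submodule k M) (h : Module.Dual k M) :
    tsub k M P Q ≤ LinearMap.ker (pairT k M f h) := by
  rw [tsub, LinearMap.range_le_ker_iff]
  ext a b
  simp [hf a a.2]

theorem tsub_le_ker_pairT_of_right {Q : Submodule k M} {h : Module.Dual k M}
    (hh : ∀ x ∈ Q, h x = 0) (P : Submodule k M) (f : Module.Dual k M) :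
    tsub k M P Q ≤ LinearMap.ker (pairT k M f h) := by
  rw [tsub, LinearMap.range_le_ker_iff]
  ext a b
  simp [hh b b.2]

theorem pairT_eq_of_sub_mem {W Z : Submodule k M} {f h : Module.Dual k M}
    (hf : ∀ x ∈ Z, f x = 0) (hh : ∀ x ∈ Z, h x = 0) {t : M ⊗[k] M} {s : W ⊗[k] W}
    (hts : t - TensorProduct.map W.subtype W.subtype s ∈
      tsub k M W Z ⊔ tsub k M Z W ⊔ tsub k M Z Z) :
    pairT k M f h t = pairT k W (f ∘ₗ W.subtype) (h ∘ₗ W.subtype) s := by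
  have hker : tsub k M W Z ⊔ tsub k M Z W ⊔ tsub k M Z Z ≤ LinearMap.ker (pairT k M f h) :=
    sup_le (sup_le (tsub_le_ker_pairT_of_right hh W f) (tsub_le_ker_pairT_of_left hf W h))
      (tsub_le_ker_pairT_of_right hh Z f)
  rw [← pairT_map, ← sub_eq_zero, ← map_sub]
  exact hker hts

end Pairing

/-- The transpose `[f, h]*` of `d`; the paper's for `d = δ₁`. -/
noncomputable def dualBracket {k M : Type*} [CommRing k] [AddCommGroup M] [Module k M]
    (d : M →ₗ[k] M ⊗[k] M) (f h : Module.Dual k M) : Module.Dual k M :=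
  pairT k M f h ∘ₗ d

theorem dualBracket_swap {k M : Type*} [CommRing k] [AddCommGroup M] [Module k M]
    {d : M →ₗ[k] M ⊗[k] M} (hd : ∀ v, TensorProduct.comm k M M (d v) = -d v)
    (f h : Module.Dual k M) : dualBracket d h f = -dualBracket d f h := by
  ext v
  simp [dualBracket, ← pairT_comm f h, hd]

theorem eq_zero_of_symm_of_antisymm {α G : Type*} [AddCommGroup G] [IsAddTorsionFree G]
    {B : α → α → α → G} (hsymm : ∀ x y w, B x y w = B w y x)
    (hanti : ∀ x y w, B x y w = -B y x w) (x y w : α) : B x y w = 0 := by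
  rw [← neg_eq_self]
  calc -B x y w = B y x w := by rw [hanti, neg_neg]
    _ = B w x y := hsymm y x w
    _ = -B x w y := hanti w x y
    _ = -B y w x := by rw [hsymm x w y]
    _ = B w y x := (hanti w y x).symm
    _ = B x y w := hsymm w y x

theorem dualBracket_add_dualBracket_eq_zero {k M : Type*} [CommRing k] [IsAddTorsionFree k]
    [AddCommGroup M] [Module k M] {d : M →ₗ[k] M ⊗[k] M}
    (hd : ∀ v, TensorProduct.comm k M M (d v) = -d v) {A B : M →ₗ[k] Module.Dual k M}
    (hA : ∀ h v w, dualBracket d (A v) h w = dualBracket d (A w) h v)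
    (hB : ∀ h v w, dualBracket d (B v) h w = dualBracket d (B w) h v) (u v : M) :
    dualBracket d (A u) (B v) + dualBracket d (B u) (A v) = 0 := by
  ext w
  refine eq_zero_of_symm_of_antisymm
    (B := fun x y w => (dualBracket d (A x) (B y) + dualBracket d (B x) (A y)) w) ?_ ?_ u v w
  · intro x y w
    simp only [LinearMap.add_apply, hA _ x w, hB _ x w]
  · intro x y w
    simp only [LinearMap.add_apply, LinearMap.neg_apply, dualBracket_swap hd (A x),
      dualBracket_swap hd (B x)]
    abel

theorem comp_add_comp_eq_zero_of_dualBracket {k M J : Type*} [CommRing k] [AddCommGroup M]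
    [Module k M] [Fintype J] {bl : J → Module.Dual k M} (hbl : LinearIndependent k bl)
    {d : M →ₗ[k] M ⊗[k] M} {S : J → (Module.Dual k M →ₗ[k] M)}
    (hS : ∀ f h v, pairT k M f h (d v) = ∑ j, f (S j h) * bl j v)
    {A B : M →ₗ[k] Module.Dual k M} (hA : ∀ v w, A v w = -A w v) (hB : ∀ v w, B v w = -B w v)
    (hAB : ∀ u v, dualBracket d (A u) (B v) + dualBracket d (B u) (A v) = 0) (j : J) :
    A ∘ₗ S j ∘ₗ B + B ∘ₗ S j ∘ₗ A = 0 := by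
  have hcoord : ∀ u v, A u (S j (B v)) + B u (S j (A v)) = 0 := by
    intro u v
    refine Fintype.linearIndependent_iff.mp hbl
      (fun j => A u (S j (B v)) + B u (S j (A v))) ?_ j
    rw [← hAB u v]
    ext w
    simp [dualBracket, hS, Finset.sum_add_distrib, add_mul]
  ext v u
  simp only [LinearMap.add_apply, LinearMap.comp_apply, LinearMap.zero_apply, hA _ u, hB _ u]
  linear_combination -hcoord u v

section LieAlgebra

variable {k g : Type*} [CommRing k] [LieRing g] [LieAlgebra k g]

@[simp]
theorem tAct_tmul (x a b : g) : tAct k g x (a ⊗ₜ b) = ⁅x, a⁆ ⊗ₜ b + a ⊗ₜ ⁅x, b⁆ := by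
  simp [tAct]

theorem pairT_tAct {φ H : Module.Dual k g} (hH : ∀ x y : g, H ⁅x, y⁆ = 0) (x : g) (t : g ⊗[k] g) :
    pairT k g φ H (tAct k g x t) = pairT k g (φ ∘ₗ LieAlgebra.ad k g x) H t := by
  induction t using TensorProduct.induction_on with
  | zero => simp
  | tmul a b => simp [hH]
  | add s t hs ht => simp only [map_add, hs, ht]

theorem pairT_ad_comp_apply_comm
    (h2step : ∀ x y : g, ⁅x, y⁆ ∈ LieAlgebra.center k g) {δ : g →ₗ[k] g ⊗[k] g}
    (hcoc : ∀ x y, δ ⁅x, y⁆ = tAct k g x (δ y) - tAct k g y (δ x))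
    (hδz : ∀ z ∈ (LieAlgebra.center k g).toSubmodule,
      δ z ∈ tsub k g (LieAlgebra.center k g).toSubmodule (LieAlgebra.center k g).toSubmodule)
    (φ : Module.Dual k g) {H : Module.Dual k g}
    (hH : ∀ z ∈ (LieAlgebra.center k g).toSubmodule, H z = 0) (x y : g) :
    pairT k g (φ ∘ₗ LieAlgebra.ad k g x) H (δ y) =
      pairT k g (φ ∘ₗ LieAlgebra.ad k g y) H (δ x) := by
  have hHbracket : ∀ x y, H ⁅x, y⁆ = 0 := fun x y => hH _ (h2step x y)
  rw [← sub_eq_zero, ← pairT_tAct hHbracket, ← pairT_tAct hHbracket, ← map_sub, ← hcoc]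
  exact tsub_le_ker_pairT_of_right hH _ φ (hδz _ (h2step x y))

end LieAlgebra

theorem coord_projectionOnto_comp_ad_comp_subtype {k n I : Type*} [CommRing k] [LieRing n]
    [LieAlgebra k n] [Fintype I] (h2step : ∀ x y : n, ⁅x, y⁆ ∈ LieAlgebra.center k n)
    {W : Submodule k n} (hcompl : IsCompl (LieAlgebra.center k n).toSubmodule W)
    (bz : Module.Basis I k (LieAlgebra.center k n).toSubmodule) {T : I → (W →ₗ[k] Module.Dual k W)}
    (hT : ∀ v w : W, (⁅(v : n), (w : n)⁆ : n) = ∑ i, T i v w • ((bz i : n))) (a : I) (v : W) :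
    (bz.coord a ∘ₗ (LieAlgebra.center k n).toSubmodule.projectionOnto W hcompl) ∘ₗ
      LieAlgebra.ad k n v ∘ₗ W.subtype = T a v := by
  ext w
  have hbracket : (⟨⁅(v : n), (w : n)⁆, h2step v w⟩ : (LieAlgebra.center k n).toSubmodule) =
      ∑ i, T i v w • bz i :=
    Subtype.ext (by simpa using hT v w)
  simp only [LinearMap.comp_apply, LieAlgebra.ad_apply, Submodule.subtype_apply,
    Submodule.projectionOnto_apply_of_mem_left hcompl (h2step v w), hbracket,
    Module.Basis.coord_apply, Module.Basis.repr_sum_self]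

theorem dualBracket_apply_comm {k n I : Type*} [CommRing k] [LieRing n] [LieAlgebra k n]
    [Fintype I] (h2step : ∀ x y : n, ⁅x, y⁆ ∈ LieAlgebra.center k n) {W : Submodule k n}
    (hcompl : IsCompl (LieAlgebra.center k n).toSubmodule W) {δ : n →ₗ[k] n ⊗[k] n}
    (hcoc : ∀ x y, δ ⁅x, y⁆ = tAct k n x (δ y) - tAct k n y (δ x))
    (hδz : ∀ z ∈ (LieAlgebra.center k n).toSubmodule,
      δ z ∈ tsub k n (LieAlgebra.center k n).toSubmodule (LieAlgebra.center k n).toSubmodule)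
    (bz : Module.Basis I k (LieAlgebra.center k n).toSubmodule) {T : I → (W →ₗ[k] Module.Dual k W)}
    (hT : ∀ v w : W, (⁅(v : n), (w : n)⁆ : n) = ∑ i, T i v w • ((bz i : n)))
    {d1 : W →ₗ[k] W ⊗[k] W}
    (hd1comp : ∀ v : W, δ (v : n) - (TensorProduct.map W.subtype W.subtype) (d1 v) ∈
      tsub k n W (LieAlgebra.center k n).toSubmodule
        ⊔ tsub k n (LieAlgebra.center k n).toSubmodule W
        ⊔ tsub k n (LieAlgebra.center k n).toSubmodule (LieAlgebra.center k n).toSubmodule)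
    (a : I) (h : Module.Dual k W) (v w : W) :
    dualBracket d1 (T a v) h w = dualBracket d1 (T a w) h v := by
  let ξ : Module.Dual k n :=
    bz.coord a ∘ₗ (LieAlgebra.center k n).toSubmodule.projectionOnto W hcompl
  let μ : Module.Dual k n := h ∘ₗ W.projectionOnto _ hcompl.symm
  have hμ : ∀ x ∈ (LieAlgebra.center k n).toSubmodule, μ x = 0 := fun x hx => by
    simp [μ, Submodule.projectionOnto_apply_of_mem_right hcompl.symm hx]
  have hξ : ∀ (u : n), ∀ x ∈ (LieAlgebra.center k n).toSubmodule,
      (ξ ∘ₗ LieAlgebra.ad k n u) x = 0 := fun u x hx => by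
    simp [hx u]
  have hμW : μ ∘ₗ W.subtype = h := by ext; simp [μ]
  have key := pairT_ad_comp_apply_comm h2step hcoc hδz ξ hμ v w
  rwa [pairT_eq_of_sub_mem (hξ v) hμ (hd1comp w), pairT_eq_of_sub_mem (hξ w) hμ (hd1comp v),
    LinearMap.comp_assoc, coord_projectionOnto_comp_ad_comp_subtype h2step hcompl bz hT, hμW,
    LinearMap.comp_assoc, coord_projectionOnto_comp_ad_comp_subtype h2step hcompl bz hT] at key

theorem stmt4_general (k n : Type*) [Field k] [CharZero k] [LieRing n] [LieAlgebra k n]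
    (h2step : ∀ x y : n, ⁅x, y⁆ ∈ LieAlgebra.center k n)
    (W : Submodule k n)
    (hcompl : IsCompl (LieAlgebra.center k n).toSubmodule W)
    (δ : n →ₗ[k] n ⊗[k] n)
    -- δ is a Lie bialgebra structure:
    (hcoc : ∀ x y, δ ⁅x, y⁆ = tAct k n x (δ y) - tAct k n y (δ x))
    -- bases of z and of W*:
    {I J : Type*} [Fintype I] [Fintype J]
    (bz : Module.Basis I k (LieAlgebra.center k n).toSubmodule)
    (bl : Module.Basis J k (Module.Dual k W))
    -- the antisymmetric maps T_i : W → W* determined by the bracket: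
    (T : I → (W →ₗ[k] Module.Dual k W))
    (hTanti : ∀ i (v w : W), T i v w = - T i w v)
    (hT : ∀ v w : W, (⁅(v : n), (w : n)⁆ : n) = ∑ i, T i v w • ((bz i : n)))
    -- δ₁, the Λ²W-component of δ|_W, as an antisymmetric-tensor-valued map on W:
    (d1 : W →ₗ[k] W ⊗[k] W)
    (hd1anti : ∀ v, TensorProduct.comm k W W (d1 v) = - d1 v)
    (hd1comp : ∀ v : W, δ (v : n) - (TensorProduct.map W.subtype W.subtype) (d1 v) ∈
      tsub k n W (LieAlgebra.center k n).toSubmodule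
        ⊔ tsub k n (LieAlgebra.center k n).toSubmodule W
        ⊔ tsub k n (LieAlgebra.center k n).toSubmodule (LieAlgebra.center k n).toSubmodule)
    -- the antisymmetric maps S_j : W* → W determined by the transpose of δ₁:
    (S : J → (Module.Dual k W →ₗ[k] W))
    (hS : ∀ (f h : Module.Dual k W) (v : W),
      pairT k W f h (d1 v) = ∑ j, f (S j h) * (bl j) v)
    -- hypothesis δ(z) ⊆ Λ²z:
    (hδz : ∀ z ∈ (LieAlgebra.center k n).toSubmodule,
      δ z ∈ tsub k n (LieAlgebra.center k n).toSubmodule (LieAlgebra.center k n).toSubmodule) :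
    -- conclusion:
    ∀ (i : I) (j : J) (l : I),
      (T i).comp ((S j).comp (T l)) + (T l).comp ((S j).comp (T i)) = 0 := by
  intro i j l
  have hsymm := dualBracket_apply_comm h2step hcompl hcoc hδz bz hT hd1comp
  exact comp_add_comp_eq_zero_of_dualBracket bl.linearIndependent hS (hTanti i) (hTanti l)
    (dualBracket_add_dualBracket_eq_zero hd1anti (hsymm i) (hsymm l)) j

/-- for a finite-dimensional 2-step nilpotent Lie bialgebra `(n,δ)` with
center `z`, complement `W`, basis `{z_i}` of `z`, basis `{λ_j}` of `W*`, with
`T_i : W → W*` defined by `[v,w] = Σ_i T_i(v)(w) z_i` and `S_j : W* → W` defined from the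
transpose of the `Λ²W`-component `δ₁` of `δ|_W` via `[λ,μ]* = Σ_j S_j(μ)(λ) λ_j`
(`[λ,μ]*(v) = λ(v₁)μ(v₂)` for `δ₁(v) = v₁∧v₂`): if `δ(z) ⊆ Λ²z` then
`T_i S_j T_k + T_k S_j T_i = 0` for all `i,j,k`. -/
theorem stmt4 (k n : Type*) [Field k] [CharZero k] [LieRing n] [LieAlgebra k n]
    [FiniteDimensional k n]
    (h2step : ∀ x y : n, ⁅x, y⁆ ∈ LieAlgebra.center k n)
    (W : Submodule k n)
    (hcompl : IsCompl (LieAlgebra.center k n).toSubmodule W)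
    (δ : n →ₗ[k] n ⊗[k] n)
    -- δ is a Lie bialgebra structure:
    (hanti : ∀ x, TensorProduct.comm k n n (δ x) = - δ x)
    (hcoJ : ∀ x, (TensorProduct.map δ LinearMap.id) (δ x)
        + tCyc k n ((TensorProduct.map δ LinearMap.id) (δ x))
        + tCyc k n (tCyc k n ((TensorProduct.map δ LinearMap.id) (δ x))) = 0)
    (hcoc : ∀ x y, δ ⁅x, y⁆ = tAct k n x (δ y) - tAct k n y (δ x))
    -- bases of z and of W*:
    {I J : Type*} [Fintype I] [Fintype J]
    (bz : Module.Basis I k (LieAlgebra.center k n).toSubmodule)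
    (bl : Module.Basis J k (Module.Dual k W))
    -- the antisymmetric maps T_i : W → W* determined by the bracket:
    (T : I → (W →ₗ[k] Module.Dual k W))
    (hTanti : ∀ i (v w : W), T i v w = - T i w v)
    (hT : ∀ v w : W, (⁅(v : n), (w : n)⁆ : n) = ∑ i, T i v w • ((bz i : n)))
    -- δ₁, the Λ²W-component of δ|_W, as an antisymmetric-tensor-valued map on W:
    (d1 : W →ₗ[k] W ⊗[k] W)
    (hd1anti : ∀ v, TensorProduct.comm k W W (d1 v) = - d1 v)
    (hd1comp : ∀ v : W, δ (v : n) - (TensorProduct.map W.subtype W.subtype) (d1 v) ∈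
      tsub k n W (LieAlgebra.center k n).toSubmodule
        ⊔ tsub k n (LieAlgebra.center k n).toSubmodule W
        ⊔ tsub k n (LieAlgebra.center k n).toSubmodule (LieAlgebra.center k n).toSubmodule)
    -- the antisymmetric maps S_j : W* → W determined by the transpose of δ₁:
    (S : J → (Module.Dual k W →ₗ[k] W))
    (hSanti : ∀ j (f h : Module.Dual k W), f (S j h) = - h (S j f))
    (hS : ∀ (f h : Module.Dual k W) (v : W),
      pairT k W f h (d1 v) = ∑ j, f (S j h) * (bl j) v)
    -- hypothesis δ(z) ⊆ Λ²z:
    (hδz : ∀ z ∈ (LieAlgebra.center k n).toSubmodule,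
      δ z ∈ tsub k n (LieAlgebra.center k n).toSubmodule (LieAlgebra.center k n).toSubmodule) :
    -- conclusion:
    ∀ (i : I) (j : J) (l : I),
      (T i).comp ((S j).comp (T l)) + (T l).comp ((S j).comp (T i)) = 0 :=
  stmt4_general k n h2step W hcompl δ hcoc bz bl T hTanti hT d1 hd1anti hd1comp S hS hδz
end

section
/- Let G = (V,A) be a finite simple graph without isolated vertices and n = n(G) = W ⊕ z its graph algebra over a field k of characteristic zero. Let ω ∈ W∧z be n-invariant and write ω = Σ_{e∈V, α∈A} λ_{e,α} e∧α. Then λ_{e,α} = 0 for every edge α ∈ A and every vertex e ∈ V of degree at least 2. -/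
open TensorProduct

set_option synthInstance.maxHeartbeats 1000000
set_option maxHeartbeats 1000000

/-- The degree (valency) of a vertex `e` in the graph with edge set `A` and
endpoint maps `src`, `tgt`. -/
def deg {V A : Type*} [Fintype A] [DecidableEq V] (src tgt : A → V) (e : V) : ℕ :=
  (Finset.univ.filter (fun a : A => src a = e ∨ tgt a = e)).card


/-!
Acting on `ω` by a vertex `e_i` and reading off the coefficient of `β ⊗ α` gives, for every
vertex `i` and edges `α, β`, the relation `⟨λ_{·,α}⟩_β(i) = ⟨λ_{·,β}⟩_α(i)`, where
`⟨μ⟩_β(i) = ±μ(j)` if `β` joins `i` to `j` and `0` if `i` is not on `β` (`signedNeighbor`).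
Let `e` have edges to `f ≠ g`. If `α` avoids `f`, the relation at `f` with `β = ef` reads
`±λ_{e,α} = 0`, and likewise for `g`. Otherwise `α = fg`, and the three relations around the
triangle `efg` compose to `λ_{e,α} = -λ_{e,α}`.
-/

theorem tAct_tmul_s9 (k g : Type*) [CommRing k] [LieRing g] [LieAlgebra k g] (x u v : g) :
    tAct k g x (u ⊗ₜ[k] v) = ⁅x, u⁆ ⊗ₜ[k] v + u ⊗ₜ[k] ⁅x, v⁆ := by
  simp [tAct]

theorem repr_tAct_sum_wedge {k N ι κ : Type*} [CommRing k] [LieRing N] [LieAlgebra k N]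
    [Fintype ι] [Fintype κ] (B : Module.Basis (ι ⊕ κ) k N)
    (hcentral : ∀ (a : κ) (x : N), ⁅B (Sum.inr a), x⁆ = 0) (lam : ι → κ → k) (x : N) (b a : κ) :
    (B.tensorProduct B).repr (tAct k N x (∑ e : ι, ∑ a' : κ,
        lam e a' • (B (Sum.inl e) ⊗ₜ[k] B (Sum.inr a') - B (Sum.inr a') ⊗ₜ[k] B (Sum.inl e))))
        (Sum.inr b, Sum.inr a)
      = ∑ e, lam e a * B.repr ⁅x, B (Sum.inl e)⁆ (Sum.inr b)
        - ∑ e, lam e b * B.repr ⁅x, B (Sum.inl e)⁆ (Sum.inr a) := by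
  classical
  have hcentral' : ∀ (a : κ) (x : N), ⁅x, B (Sum.inr a)⁆ = 0 := fun a x => by
    rw [← lie_skew, hcentral, neg_zero]
  simp [tAct_tmul_s9, hcentral', Finset.sum_sub_distrib, mul_sub, Finsupp.single_apply]

namespace GraphAlgebra

variable {V A : Type*} (src tgt : A → V)

def Joins (b : A) (i j : V) : Prop :=
  src b = i ∧ tgt b = j ∨ src b = j ∧ tgt b = i

variable {k N : Type*} [Field k] [LieRing N] [LieAlgebra k N]

structure IsGraphBasis (B : Module.Basis (V ⊕ A) k N) : Prop where
  inr_lie : ∀ (a : A) (x : N), ⁅B (Sum.inr a), x⁆ = 0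
  lie_inl_src_tgt : ∀ a : A, ⁅B (Sum.inl (src a)), B (Sum.inl (tgt a))⁆ = B (Sum.inr a)
  lie_inl_of_not_joins : ∀ i j : V, (∀ a : A, ¬Joins src tgt a i j) →
    ⁅B (Sum.inl i), B (Sum.inl j)⁆ = 0

variable {src tgt}

theorem Joins.symm {b : A} {i j : V} (h : Joins src tgt b i j) : Joins src tgt b j i :=
  Or.symm h

theorem Joins.unique
    (hsimple : ∀ a b : A,
      (src a = src b ∧ tgt a = tgt b) ∨ (src a = tgt b ∧ tgt a = src b) → a = b)
    {b c : A} {i j : V} (hb : Joins src tgt b i j) (hc : Joins src tgt c i j) : b = c := by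
  rcases hc with ⟨rfl, rfl⟩ | ⟨rfl, rfl⟩
  · exact hsimple b c hb
  · exact hsimple b c hb.symm

theorem exists_joins_of_incident {b : A} {i : V} (h : src b = i ∨ tgt b = i) :
    ∃ j, Joins src tgt b i j := by
  rcases h with rfl | rfl
  · exact ⟨tgt b, Or.inl ⟨rfl, rfl⟩⟩
  · exact ⟨src b, Or.inr ⟨rfl, rfl⟩⟩

theorem joins_of_incident_of_incident {a : A} {f g : V} (hfg : f ≠ g)
    (hf : src a = f ∨ tgt a = f) (hg : src a = g ∨ tgt a = g) : Joins src tgt a f g := by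
  rcases hf with rfl | rfl <;> rcases hg with h | h
  · exact absurd h hfg
  · exact Or.inl ⟨rfl, h⟩
  · exact Or.inr ⟨h, rfl⟩
  · exact absurd h hfg

variable {B : Module.Basis (V ⊕ A) k N}

theorem IsGraphBasis.repr_lie_inl_inl_of_not_joins (hB : IsGraphBasis src tgt B) {b : A}
    {i j : V} (hb : ¬Joins src tgt b i j) :
    B.repr ⁅B (Sum.inl i), B (Sum.inl j)⁆ (Sum.inr b) = 0 := by
  by_cases hij : ∃ c, Joins src tgt c i j
  · obtain ⟨c, hc⟩ := hij
    have hcb : c ≠ b := by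
      rintro rfl
      exact hb hc
    rcases hc with ⟨rfl, rfl⟩ | ⟨rfl, rfl⟩
    · simp [hB.lie_inl_src_tgt, hcb]
    · rw [← lie_skew, hB.lie_inl_src_tgt]
      simp [hcb]
  · push Not at hij
    simp [hB.lie_inl_of_not_joins i j hij]

variable [DecidableEq V]

theorem IsGraphBasis.repr_lie_inl_inl (hB : IsGraphBasis src tgt B)
    (hloop : ∀ a, src a ≠ tgt a) (i j : V) (b : A) :
    B.repr ⁅B (Sum.inl i), B (Sum.inl j)⁆ (Sum.inr b)
      = (if src b = i ∧ tgt b = j then 1 else 0) - (if src b = j ∧ tgt b = i then 1 else 0) := by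
  by_cases hb : Joins src tgt b i j
  · rcases hb with ⟨rfl, rfl⟩ | ⟨rfl, rfl⟩
    · simp [hB.lie_inl_src_tgt, hloop b]
    · rw [← lie_skew, hB.lie_inl_src_tgt]
      simp [hloop b, (hloop b).symm]
  · rw [hB.repr_lie_inl_inl_of_not_joins hb, if_neg (fun h => hb (Or.inl h)),
      if_neg (fun h => hb (Or.inr h)), sub_zero]

variable (src tgt) in
def signedNeighbor (μ : V → k) (b : A) (i : V) : k :=
  (if src b = i then μ (tgt b) else 0) - (if tgt b = i then μ (src b) else 0)

theorem IsGraphBasis.sum_mul_repr_lie_inl_inl [Fintype V] (hB : IsGraphBasis src tgt B)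
    (hloop : ∀ a, src a ≠ tgt a) (μ : V → k) (i : V) (b : A) :
    ∑ j, μ j * B.repr ⁅B (Sum.inl i), B (Sum.inl j)⁆ (Sum.inr b)
      = signedNeighbor src tgt μ b i := by
  simp [hB.repr_lie_inl_inl hloop, signedNeighbor, mul_sub, ite_and, Finset.sum_sub_distrib]

theorem IsGraphBasis.signedNeighbor_comm_of_invariant [Fintype V] [Fintype A]
    (hB : IsGraphBasis src tgt B) (hloop : ∀ a, src a ≠ tgt a) (lam : V → A → k)
    (hinv : ∀ x : N, tAct k N x (∑ e : V, ∑ a : A,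
      lam e a • (B (Sum.inl e) ⊗ₜ[k] B (Sum.inr a) - B (Sum.inr a) ⊗ₜ[k] B (Sum.inl e))) = 0)
    (i : V) (b a : A) :
    signedNeighbor src tgt (lam · a) b i = signedNeighbor src tgt (lam · b) a i := by
  have h := congrArg (fun t => (B.tensorProduct B).repr t (Sum.inr b, Sum.inr a))
    (hinv (B (Sum.inl i)))
  simp only [repr_tAct_sum_wedge B hB.inr_lie, map_zero, Finsupp.coe_zero, Pi.zero_apply,
    hB.sum_mul_repr_lie_inl_inl hloop] at h
  exact sub_eq_zero.mp h

variable (src) in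
def orient (b : A) (i : V) : k :=
  if src b = i then 1 else -1

theorem orient_mul_self (b : A) (i : V) : orient src b i * orient src b i = (1 : k) := by
  unfold orient
  split_ifs <;> norm_num

theorem Joins.orient_eq_neg (hloop : ∀ a, src a ≠ tgt a) {b : A} {i j : V}
    (h : Joins src tgt b i j) : orient src b j = -(orient src b i : k) := by
  rcases h with ⟨rfl, rfl⟩ | ⟨rfl, rfl⟩ <;> simp [orient, hloop b]

theorem Joins.signedNeighbor_eq (hloop : ∀ a, src a ≠ tgt a) {b : A} {i j : V}
    (h : Joins src tgt b i j) (μ : V → k) :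
    signedNeighbor src tgt μ b i = orient src b i * μ j := by
  rcases h with ⟨rfl, rfl⟩ | ⟨rfl, rfl⟩ <;> simp [signedNeighbor, orient, hloop b, (hloop b).symm]

theorem signedNeighbor_of_not_incident {b : A} {i : V} (hs : src b ≠ i) (ht : tgt b ≠ i)
    (μ : V → k) : signedNeighbor src tgt μ b i = 0 := by
  simp [signedNeighbor, hs, ht]

theorem eq_zero_of_joins_of_not_incident (hloop : ∀ a, src a ≠ tgt a) {lam : V → A → k}
    (hinv : ∀ i b a, signedNeighbor src tgt (lam · a) b i = signedNeighbor src tgt (lam · b) a i)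
    {a b : A} {e f : V} (hb : Joins src tgt b e f) (hs : src a ≠ f) (ht : tgt a ≠ f) :
    lam e a = 0 := by
  have h := hinv f b a
  rw [hb.symm.signedNeighbor_eq hloop, signedNeighbor_of_not_incident hs ht] at h
  exact (mul_eq_zero.mp h).resolve_left (left_ne_zero_of_mul_eq_one (orient_mul_self b f))

theorem eq_zero_of_triangle [NeZero (2 : k)] (hloop : ∀ a, src a ≠ tgt a) {lam : V → A → k}
    (hinv : ∀ i b a, signedNeighbor src tgt (lam · a) b i = signedNeighbor src tgt (lam · b) a i)
    {a b c : A} {e f g : V} (hb : Joins src tgt b e f) (hc : Joins src tgt c e g)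
    (ha : Joins src tgt a f g) : lam e a = 0 := by
  have hf := hinv f b a
  have hg := hinv g c a
  have he := hinv e b c
  rw [hb.symm.signedNeighbor_eq hloop, ha.signedNeighbor_eq hloop] at hf
  rw [hc.symm.signedNeighbor_eq hloop, ha.symm.signedNeighbor_eq hloop,
    ha.orient_eq_neg hloop] at hg
  rw [hb.signedNeighbor_eq hloop, hc.signedNeighbor_eq hloop, hb.symm.orient_eq_neg hloop,
    hc.symm.orient_eq_neg hloop] at he
  set p : k := orient src b f
  set q : k := orient src c g
  set r : k := orient src a f
  have hp : p * p = 1 := orient_mul_self b f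
  have hq : q * q = 1 := orient_mul_self c g
  -- with `x, y, z := lam e a, lam g b, lam f c`: `x = p r y`, `y = p q z`, `z = -q r x`
  have h2x : 2 * lam e a = 0 := by
    linear_combination p * hf + q * hg + p * q * r * he - lam e a * hp - lam e a * hq
      - p * r * lam g b * hq + q * r * lam f c * hp
  exact (mul_eq_zero.mp h2x).resolve_left two_ne_zero

theorem eq_zero_of_two_le_deg [Fintype A] [NeZero (2 : k)] (hloop : ∀ a, src a ≠ tgt a)
    (hsimple : ∀ a b : A,
      (src a = src b ∧ tgt a = tgt b) ∨ (src a = tgt b ∧ tgt a = src b) → a = b)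
    {lam : V → A → k}
    (hinv : ∀ i b a, signedNeighbor src tgt (lam · a) b i = signedNeighbor src tgt (lam · b) a i)
    {e : V} (he : 2 ≤ deg src tgt e) (a : A) : lam e a = 0 := by
  obtain ⟨b, hb, c, hc, hbc⟩ := Finset.one_lt_card.mp he
  simp only [Finset.mem_filter, Finset.mem_univ, true_and] at hb hc
  obtain ⟨f, hbf⟩ := exists_joins_of_incident hb
  obtain ⟨g, hcg⟩ := exists_joins_of_incident hc
  have hfg : f ≠ g := by
    rintro rfl
    exact hbc (hbf.unique hsimple hcg)
  by_cases haf : src a = f ∨ tgt a = f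
  · by_cases hag : src a = g ∨ tgt a = g
    · exact eq_zero_of_triangle hloop hinv hbf hcg (joins_of_incident_of_incident hfg haf hag)
    · push Not at hag
      exact eq_zero_of_joins_of_not_incident hloop hinv hcg hag.1 hag.2
  · push Not at haf
    exact eq_zero_of_joins_of_not_incident hloop hinv hbf haf.1 haf.2

end GraphAlgebra

theorem stmt9_general (k V A N : Type*) [Field k] [CharZero k]
    [Fintype V] [Fintype A] [DecidableEq V]
    [LieRing N] [LieAlgebra k N]
    (src tgt : A → V)
    (hloop : ∀ a, src a ≠ tgt a)
    (hsimple : ∀ a b : A,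
      (src a = src b ∧ tgt a = tgt b) ∨ (src a = tgt b ∧ tgt a = src b) → a = b)
    (B : Module.Basis (V ⊕ A) k N)
    (hbz : ∀ (a : A) (x : N), ⁅B (Sum.inr a), x⁆ = 0)
    (hbe : ∀ a : A, ⁅B (Sum.inl (src a)), B (Sum.inl (tgt a))⁆ = B (Sum.inr a))
    (hbe0 : ∀ i j : V,
      (∀ a : A, ¬((src a = i ∧ tgt a = j) ∨ (src a = j ∧ tgt a = i))) →
      ⁅B (Sum.inl i), B (Sum.inl j)⁆ = 0)
    (lam : V → A → k)
    (ω : N ⊗[k] N)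
    (hω : ω = ∑ e : V, ∑ a : A,
      lam e a • (B (Sum.inl e) ⊗ₜ[k] B (Sum.inr a) - B (Sum.inr a) ⊗ₜ[k] B (Sum.inl e)))
    (hinv : ∀ x : N, tAct k N x ω = 0) :
    ∀ (e : V) (a : A), 2 ≤ deg src tgt e → lam e a = 0 := by
  intro e a he
  have hB : GraphAlgebra.IsGraphBasis src tgt B := ⟨hbz, hbe, hbe0⟩
  subst hω
  exact GraphAlgebra.eq_zero_of_two_le_deg hloop hsimple
    (hB.signedNeighbor_comm_of_invariant hloop lam hinv) he a

/-- in the graph algebra `n(G) = W ⊕ z` of a finite simple graph without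
isolated vertices, if `ω = Σ_{e,α} λ_{e,α} e∧α ∈ W∧z` (each wedge `e∧α` modelled as
`e ⊗ α − α ⊗ e`) is `n`-invariant, then `λ_{e,α} = 0` for every edge `α` and every vertex
`e` of degree at least 2. -/
theorem stmt9 (k V A N : Type*) [Field k] [CharZero k]
    [Fintype V] [Fintype A] [DecidableEq V] [DecidableEq A]
    [LieRing N] [LieAlgebra k N]
    (src tgt : A → V)
    (hloop : ∀ a, src a ≠ tgt a)
    (hsimple : ∀ a b : A,
      (src a = src b ∧ tgt a = tgt b) ∨ (src a = tgt b ∧ tgt a = src b) → a = b)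
    (B : Module.Basis (V ⊕ A) k N)
    (hbz : ∀ (a : A) (x : N), ⁅B (Sum.inr a), x⁆ = 0)
    (hbe : ∀ a : A, ⁅B (Sum.inl (src a)), B (Sum.inl (tgt a))⁆ = B (Sum.inr a))
    (hbe0 : ∀ i j : V,
      (∀ a : A, ¬((src a = i ∧ tgt a = j) ∨ (src a = j ∧ tgt a = i))) →
      ⁅B (Sum.inl i), B (Sum.inl j)⁆ = 0)
    (hnoiso : ∀ e : V, 0 < deg src tgt e)
    (lam : V → A → k)
    (ω : N ⊗[k] N)
    (hω : ω = ∑ e : V, ∑ a : A,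
      lam e a • (B (Sum.inl e) ⊗ₜ[k] B (Sum.inr a) - B (Sum.inr a) ⊗ₜ[k] B (Sum.inl e)))
    (hinv : ∀ x : N, tAct k N x ω = 0) :
    ∀ (e : V) (a : A), 2 ≤ deg src tgt e → lam e a = 0 :=
  stmt9_general k V A N src tgt hloop hsimple B hbz hbe hbe0 lam ω hω hinv
end

section
/- Let G = (V,A) be a finite simple graph without isolated vertices and n = n(G) = W ⊕ z its graph algebra over a field k of characteristic zero. Then (Λ²n)^n = Λ²z if and only if every vertex of G has degree at least 2. -/
open TensorProduct

set_option synthInstance.maxHeartbeats 1000000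
set_option maxHeartbeats 1000000

/-!
Expand an antisymmetric tensor `ω` in the basis `e_i ⊗ e_j, e_i ⊗ z_a, z_a ⊗ e_i, z_a ⊗ z_b` of
`n ⊗ n`. Reading the equation `e_i · ω = 0` at the coordinates `(z_a, e_m)` and `(z_a, z_b)` shows
that the `e ⊗ e` coefficients vanish at every non-isolated vertex, and that the mixed coefficients
`d j b` of `e_j ⊗ z_b` satisfy `σ(a,i) d(j_a, b) = σ(b,i) d(j_b, a)`, where `j_a` is the other end
of an edge `a` at `i` and `σ` is the signed incidence. At a vertex `j` of degree at least two this
forces `d j b = 0`, so `ω ∈ Λ²z`. Conversely, at a leaf `e` with edge `a`, the tensor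
`e_e ∧ z_a` is invariant but does not lie in `Λ²z`.
-/

open Module

section TensorCoordinates

variable {R M N M' N' ι κ : Type*} [CommRing R] [AddCommGroup M] [Module R M]
  [AddCommGroup N] [Module R N] [AddCommGroup M'] [Module R M'] [AddCommGroup N'] [Module R N']

theorem dualDistrib_map_apply (f : Dual R M') (g : Dual R N') (F : M →ₗ[R] M') (G : N →ₗ[R] N')
    (ω : M ⊗[R] N) :
    dualDistrib R M' N' (f ⊗ₜ g) (map F G ω) = dualDistrib R M N ((f ∘ₗ F) ⊗ₜ (g ∘ₗ G)) ω := by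
  induction ω with
  | zero => simp
  | tmul => simp
  | add _ _ h₁ h₂ => simp [h₁, h₂]

theorem Module.Basis.tensorProduct_repr_eq_dualDistrib (b : Basis ι R M) (c : Basis κ R N)
    (ω : M ⊗[R] N) (p : ι) (q : κ) :
    (b.tensorProduct c).repr ω (p, q) = dualDistrib R M N (b.coord p ⊗ₜ c.coord q) ω := by
  induction ω with
  | zero => simp
  | tmul => simp [mul_comm]
  | add _ _ h₁ h₂ => simp [h₁, h₂]

theorem Module.Basis.tensorProduct_repr_comm (b : Basis ι R M) (ω : M ⊗[R] M) (p q : ι) :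
    (b.tensorProduct b).repr (TensorProduct.comm R M M ω) (q, p) =
      (b.tensorProduct b).repr ω (p, q) := by
  rw [b.tensorProduct_repr_eq_dualDistrib, b.tensorProduct_repr_eq_dualDistrib,
    dualDistrib_apply_comm, comm_tmul]

theorem mem_range_mapIncl_span_image_iff (b : Basis ι R M) (c : Basis κ R N) (s : Set ι)
    (t : Set κ) (ω : M ⊗[R] N) :
    ω ∈ LinearMap.range (mapIncl (Submodule.span R (b '' s)) (Submodule.span R (c '' t))) ↔
      ∀ p q, (b.tensorProduct c).repr ω (p, q) ≠ 0 → p ∈ s ∧ q ∈ t := by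
  have hrange : LinearMap.range (mapIncl (Submodule.span R (b '' s)) (Submodule.span R (c '' t)))
      = Submodule.span R (b.tensorProduct c '' s ×ˢ t) := by
    rw [range_mapIncl, Submodule.map₂_span_span, Set.image2_image_left, Set.image2_image_right,
      ← Set.image_prod]
    simp [Basis.tensorProduct_apply']
  rw [hrange, Basis.mem_span_image]
  constructor
  · intro h p q hpq
    exact h (Finsupp.mem_support_iff.mpr hpq)
  · rintro h ⟨p, q⟩ hpq
    exact h p q (Finsupp.mem_support_iff.mp hpq)

end TensorCoordinates

section TensorAction

variable {R L : Type*} [CommRing R] [LieRing L] [LieAlgebra R L]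

theorem dualDistrib_tAct (x : L) (f g : Dual R L) (ω : L ⊗[R] L) :
    dualDistrib R L L (f ⊗ₜ g) (tAct R L x ω) =
      dualDistrib R L L ((f ∘ₗ LieAlgebra.ad R L x) ⊗ₜ g) ω +
        dualDistrib R L L (f ⊗ₜ (g ∘ₗ LieAlgebra.ad R L x)) ω := by
  simp [tAct, dualDistrib_map_apply]

theorem tAct_eq_zero_of_mem_tsub {x : L} {P Q : Submodule R L}
    (hP : P ≤ LinearMap.ker (LieAlgebra.ad R L x)) (hQ : Q ≤ LinearMap.ker (LieAlgebra.ad R L x))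
    {ω : L ⊗[R] L} (hω : ω ∈ tsub R L P Q) : tAct R L x ω = 0 := by
  have hP' : LieAlgebra.ad R L x ∘ₗ P.subtype = 0 := LinearMap.ext fun p ↦ hP p.2
  have hQ' : LieAlgebra.ad R L x ∘ₗ Q.subtype = 0 := LinearMap.ext fun q ↦ hQ q.2
  obtain ⟨t, rfl⟩ := hω
  rw [← LinearMap.comp_apply, tAct, LinearMap.add_comp, ← map_comp, ← map_comp, hP', hQ',
    map_zero_left, map_zero_right, add_zero, LinearMap.zero_apply]

end TensorAction

section Graph

variable {k V A : Type*} [DecidableEq V] (src tgt : A → V)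

def Joins (a : A) (i j : V) : Prop := (src a = i ∧ tgt a = j) ∨ (src a = j ∧ tgt a = i)

def otherEnd (a : A) (i : V) : V := if src a = i then tgt a else src a

variable (k) in
/-- The coefficient of `z_a` in `⁅e_i, e_{otherEnd a i}⁆`. It vanishes when `a` is not incident
to `i`, which is exactly when `otherEnd a i` is a junk value. -/
def signedIncidence [Ring k] (a : A) (i : V) : k :=
  if src a = i then 1 else if tgt a = i then -1 else 0

variable {src tgt} [CommRing k] [Nontrivial k]

theorem signedIncidence_ne_zero_iff {a : A} {i : V} :
    signedIncidence k src tgt a i ≠ 0 ↔ src a = i ∨ tgt a = i := by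
  unfold signedIncidence
  split_ifs <;> simp_all

theorem exists_signedIncidence_ne_zero [Fintype A] {j : V} (hj : 0 < deg src tgt j) :
    ∃ a, signedIncidence k src tgt a j ≠ 0 := by
  obtain ⟨a, ha⟩ := Finset.card_pos.mp hj
  exact ⟨a, signedIncidence_ne_zero_iff.mpr (Finset.mem_filter.mp ha).2⟩

theorem exists_ne_signedIncidence_ne_zero [Fintype A] {j : V} (hj : 2 ≤ deg src tgt j) :
    ∃ a₁ a₂, a₁ ≠ a₂ ∧ signedIncidence k src tgt a₁ j ≠ 0 ∧ signedIncidence k src tgt a₂ j ≠ 0 := by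
  obtain ⟨a₁, h₁, a₂, h₂, hne⟩ := Finset.one_lt_card.mp hj
  exact ⟨a₁, a₂, hne, signedIncidence_ne_zero_iff.mpr (Finset.mem_filter.mp h₁).2,
    signedIncidence_ne_zero_iff.mpr (Finset.mem_filter.mp h₂).2⟩

theorem otherEnd_eq_of_ne {a : A} {u v : V} (hu : signedIncidence k src tgt a u ≠ 0)
    (hv : signedIncidence k src tgt a v ≠ 0) (huv : u ≠ v) : otherEnd src tgt a u = v := by
  rw [signedIncidence_ne_zero_iff] at hu hv
  unfold otherEnd
  grind

variable (hloop : ∀ a, src a ≠ tgt a)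
include hloop

theorem signedIncidence_otherEnd {a : A} {i : V} (h : signedIncidence k src tgt a i ≠ 0) :
    signedIncidence k src tgt a (otherEnd src tgt a i) = -signedIncidence k src tgt a i := by
  rcases signedIncidence_ne_zero_iff.mp h with rfl | rfl <;>
    simp [signedIncidence, otherEnd, hloop a]

theorem otherEnd_otherEnd {a : A} {i : V} (h : signedIncidence k src tgt a i ≠ 0) :
    otherEnd src tgt a (otherEnd src tgt a i) = i := by
  rcases signedIncidence_ne_zero_iff.mp h with rfl | rfl <;>
    simp [otherEnd, hloop a]

theorem joins_iff {a : A} {i j : V} :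
    Joins src tgt a i j ↔ signedIncidence k src tgt a i ≠ 0 ∧ otherEnd src tgt a i = j := by
  rw [Joins, signedIncidence_ne_zero_iff, otherEnd]
  have := hloop a
  grind

variable (hsimple : ∀ a b : A,
  (src a = src b ∧ tgt a = tgt b) ∨ (src a = tgt b ∧ tgt a = src b) → a = b)
include hsimple

theorem eq_of_otherEnd_eq {a b : A} {i : V} (ha : signedIncidence k src tgt a i ≠ 0)
    (hb : signedIncidence k src tgt b i ≠ 0) (h : otherEnd src tgt a i = otherEnd src tgt b i) :
    a = b := by
  have hja := (joins_iff hloop).mpr ⟨ha, rfl⟩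
  have hjb := (joins_iff hloop).mpr ⟨hb, h.symm⟩
  apply hsimple
  unfold Joins at hja hjb
  grind

/-- Either `b` misses a neighbour of `j`, and the relation at that neighbour kills `d j b`, or
`b` closes a triangle through `j`, around which the signs multiply to `-1`, giving
`d j b = -d j b`. -/
theorem eq_zero_of_two_le_deg [Fintype A] [NoZeroDivisors k] [CharZero k] {d : V → A → k}
    (hd : ∀ i a b, signedIncidence k src tgt a i * d (otherEnd src tgt a i) b =
      signedIncidence k src tgt b i * d (otherEnd src tgt b i) a)
    {j : V} (hj : 2 ≤ deg src tgt j) (b : A) : d j b = 0 := by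
  obtain ⟨a₁, a₂, hne, h₁, h₂⟩ := exists_ne_signedIncidence_ne_zero (k := k) hj
  set u := otherEnd src tgt a₁ j
  set v := otherEnd src tgt a₂ j
  have h₁u : signedIncidence k src tgt a₁ u = -signedIncidence k src tgt a₁ j :=
    signedIncidence_otherEnd hloop h₁
  have h₂v : signedIncidence k src tgt a₂ v = -signedIncidence k src tgt a₂ j :=
    signedIncidence_otherEnd hloop h₂
  have hu : otherEnd src tgt a₁ u = j := otherEnd_otherEnd hloop h₁
  have hv : otherEnd src tgt a₂ v = j := otherEnd_otherEnd hloop h₂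
  have huv : u ≠ v := fun h ↦ hne (eq_of_otherEnd_eq hloop hsimple h₁ h₂ h)
  have miss : ∀ a i, signedIncidence k src tgt a i ≠ 0 → signedIncidence k src tgt b i = 0 →
      d (otherEnd src tgt a i) b = 0 := fun a i ha hb ↦
    (mul_eq_zero.mp ((hd i a b).trans (by rw [hb, zero_mul]))).resolve_left ha
  by_cases hbu : signedIncidence k src tgt b u = 0
  · simpa [hu] using miss a₁ u (by rw [h₁u]; exact neg_ne_zero.mpr h₁) hbu
  by_cases hbv : signedIncidence k src tgt b v = 0
  · simpa [hv] using miss a₂ v (by rw [h₂v]; exact neg_ne_zero.mpr h₂) hbv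
  have hbuv : otherEnd src tgt b u = v := otherEnd_eq_of_ne hbu hbv huv
  have hbvu : otherEnd src tgt b v = u := otherEnd_eq_of_ne hbv hbu huv.symm
  have hbv' : signedIncidence k src tgt b v = -signedIncidence k src tgt b u := by
    rw [← hbuv, signedIncidence_otherEnd hloop hbu]
  have e₁ := hd u a₁ b
  have e₂ := hd v a₂ b
  have e₃ := hd j a₁ a₂
  rw [hu, h₁u, hbuv] at e₁
  rw [hv, h₂v, hbvu, hbv'] at e₂
  have : 2 * signedIncidence k src tgt a₁ j * signedIncidence k src tgt a₂ j * d j b = 0 := by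
    linear_combination (-signedIncidence k src tgt a₂ j) * e₁
      + signedIncidence k src tgt b u * e₃ - signedIncidence k src tgt a₁ j * e₂
  simpa [h₁, h₂] using this

end Graph

section EdgeSpan

variable {k V A N : Type*} [CommRing k] [AddCommGroup N] [Module k N]

def edgeSpan (B : Basis (V ⊕ A) k N) : Submodule k N :=
  Submodule.span k (Set.range fun a ↦ B (Sum.inr a))

theorem mem_tsub_edgeSpan_iff (B : Basis (V ⊕ A) k N) (ω : N ⊗[k] N) :
    ω ∈ tsub k N (edgeSpan B) (edgeSpan B) ↔
      ∀ j p, (B.tensorProduct B).repr ω (Sum.inl j, p) = 0 ∧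
        (B.tensorProduct B).repr ω (p, Sum.inl j) = 0 := by
  have hspan : edgeSpan B = Submodule.span k (B '' Set.range Sum.inr) := by
    rw [edgeSpan, ← Set.range_comp]; rfl
  rw [tsub, hspan, ← mapIncl, mem_range_mapIncl_span_image_iff]
  constructor
  · intro h j p
    exact ⟨by_contra fun hne ↦ by simpa using (h _ _ hne).1,
      by_contra fun hne ↦ by simpa using (h _ _ hne).2⟩
  · rintro h p q hpq
    constructor
    · rcases p with j | a
      · exact absurd (h j q).1 hpq
      · exact ⟨a, rfl⟩
    · rcases q with j | b
      · exact absurd (h j p).2 hpq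
      · exact ⟨b, rfl⟩

end EdgeSpan

section GraphAlgebra

variable {k V A N : Type*} [CommRing k] [LieRing N] [LieAlgebra k N]

/-- `N` is the graph algebra `n(G)`, with `B (Sum.inl i) = e_i` and `B (Sum.inr a) = a ∈ z`. -/
structure IsGraphAlgebraBasis (src tgt : A → V) (B : Basis (V ⊕ A) k N) : Prop where
  loopless : ∀ a, src a ≠ tgt a
  simple : ∀ a b : A,
    (src a = src b ∧ tgt a = tgt b) ∨ (src a = tgt b ∧ tgt a = src b) → a = b
  lie_inr : ∀ (a : A) (x : N), ⁅B (Sum.inr a), x⁆ = 0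
  lie_edge : ∀ a : A, ⁅B (Sum.inl (src a)), B (Sum.inl (tgt a))⁆ = B (Sum.inr a)
  lie_nonadj : ∀ i j : V, (∀ a : A, ¬Joins src tgt a i j) → ⁅B (Sum.inl i), B (Sum.inl j)⁆ = 0

namespace IsGraphAlgebraBasis

variable {src tgt : A → V} {B : Basis (V ⊕ A) k N} (hG : IsGraphAlgebraBasis src tgt B)
include hG

theorem tAct_eq_zero_of_mem_tsub_edgeSpan (x : N) {ω : N ⊗[k] N}
    (hω : ω ∈ tsub k N (edgeSpan B) (edgeSpan B)) : tAct k N x ω = 0 := by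
  have hle : edgeSpan B ≤ LinearMap.ker (LieAlgebra.ad k N x) := by
    refine Submodule.span_le.mpr ?_
    rintro _ ⟨a, rfl⟩
    rw [SetLike.mem_coe, LinearMap.mem_ker, LieAlgebra.ad_apply, ← lie_skew, hG.lie_inr,
      neg_zero]
  exact tAct_eq_zero_of_mem_tsub hle hle hω

variable [Nontrivial k] [DecidableEq V] [Fintype A]

theorem lie_inl_inl (i j : V) :
    ⁅B (Sum.inl i), B (Sum.inl j)⁆ =
      ∑ a, (if otherEnd src tgt a i = j then signedIncidence k src tgt a i else 0) •
        B (Sum.inr a) := by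
  have hterm : ∀ a, ¬Joins src tgt a i j →
      (if otherEnd src tgt a i = j then signedIncidence k src tgt a i else 0) • B (Sum.inr a)
        = 0 := by
    intro a ha
    split_ifs with hj
    · by_cases hai : signedIncidence k src tgt a i = 0
      · rw [hai, zero_smul]
      · exact absurd ((joins_iff hG.loopless).mpr ⟨hai, hj⟩) ha
    · exact zero_smul _ _
  by_cases h : ∃ a, Joins src tgt a i j
  · obtain ⟨a, ha⟩ := h
    obtain ⟨hai, haj⟩ := (joins_iff (k := k) hG.loopless).mp ha
    have hother : ∀ b, b ≠ a → ¬Joins src tgt b i j := fun b hba hb ↦ by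
      obtain ⟨hbi, hbj⟩ := (joins_iff (k := k) hG.loopless).mp hb
      exact hba (eq_of_otherEnd_eq hG.loopless hG.simple hbi hai (hbj.trans haj.symm))
    rw [Finset.sum_eq_single a (fun b _ hba ↦ hterm b (hother b hba)) (by simp), if_pos haj]
    rcases ha with ⟨rfl, rfl⟩ | ⟨rfl, rfl⟩
    · rw [hG.lie_edge, signedIncidence, if_pos rfl, one_smul]
    · rw [← lie_skew, hG.lie_edge, signedIncidence, if_neg (hG.loopless a), if_pos rfl,
        neg_one_smul]
  · rw [not_exists] at h
    rw [hG.lie_nonadj i j h]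
    exact (Finset.sum_eq_zero fun a _ ↦ hterm a (h a)).symm

theorem ad_inl (i : V) :
    LieAlgebra.ad k N (B (Sum.inl i)) =
      ∑ a, (signedIncidence k src tgt a i • B.coord (Sum.inl (otherEnd src tgt a i))).smulRight
        (B (Sum.inr a)) := by
  classical
  refine B.ext fun p ↦ ?_
  rcases p with j | b
  · simp [hG.lie_inl_inl, Finsupp.single_apply, eq_comm]
  · rw [LieAlgebra.ad_apply, ← lie_skew, hG.lie_inr, neg_zero]
    simp

theorem coord_inr_comp_ad (a : A) (i : V) :
    B.coord (Sum.inr a) ∘ₗ LieAlgebra.ad k N (B (Sum.inl i)) =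
      signedIncidence k src tgt a i • B.coord (Sum.inl (otherEnd src tgt a i)) := by
  classical
  ext x
  simp [hG.ad_inl, Finsupp.single_apply]

theorem coord_inl_comp_ad (m i : V) :
    B.coord (Sum.inl m) ∘ₗ LieAlgebra.ad k N (B (Sum.inl i)) = 0 := by
  ext x
  simp [hG.ad_inl]

theorem repr_inr_inr_of_invariant {i : V} {ω : N ⊗[k] N} (hω : tAct k N (B (Sum.inl i)) ω = 0)
    (a b : A) :
    signedIncidence k src tgt a i *
        (B.tensorProduct B).repr ω (Sum.inl (otherEnd src tgt a i), Sum.inr b) +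
      signedIncidence k src tgt b i *
        (B.tensorProduct B).repr ω (Sum.inr a, Sum.inl (otherEnd src tgt b i)) = 0 := by
  have h := dualDistrib_tAct (B (Sum.inl i)) (B.coord (Sum.inr a)) (B.coord (Sum.inr b)) ω
  rw [hω, map_zero, hG.coord_inr_comp_ad, hG.coord_inr_comp_ad, ← smul_tmul', tmul_smul] at h
  simpa [Basis.tensorProduct_repr_eq_dualDistrib] using h.symm

theorem repr_inr_inl_of_invariant {i : V} {ω : N ⊗[k] N} (hω : tAct k N (B (Sum.inl i)) ω = 0)
    (a : A) (m : V) :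
    signedIncidence k src tgt a i *
        (B.tensorProduct B).repr ω (Sum.inl (otherEnd src tgt a i), Sum.inl m) = 0 := by
  have h := dualDistrib_tAct (B (Sum.inl i)) (B.coord (Sum.inr a)) (B.coord (Sum.inl m)) ω
  rw [hω, map_zero, hG.coord_inr_comp_ad, hG.coord_inl_comp_ad, ← smul_tmul'] at h
  simpa [Basis.tensorProduct_repr_eq_dualDistrib] using h.symm

theorem mem_tsub_edgeSpan_of_invariant [NoZeroDivisors k] [CharZero k]
    (hdeg : ∀ e, 2 ≤ deg src tgt e) {ω : N ⊗[k] N} (hskew : TensorProduct.comm k N N ω = -ω)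
    (hinv : ∀ x, tAct k N x ω = 0) : ω ∈ tsub k N (edgeSpan B) (edgeSpan B) := by
  set R := (B.tensorProduct B).repr ω
  have hswap : ∀ p q, R (q, p) = -R (p, q) := fun p q ↦ by
    rw [← B.tensorProduct_repr_comm, hskew, map_neg, Finsupp.neg_apply]
  have hmixed : ∀ j b, R (Sum.inl j, Sum.inr b) = 0 := fun j b ↦
    eq_zero_of_two_le_deg hG.loopless hG.simple (d := fun j b ↦ R (Sum.inl j, Sum.inr b))
      (fun i a b ↦ by
        linear_combination hG.repr_inr_inr_of_invariant (hinv _) a b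
          - signedIncidence k src tgt b i * hswap (Sum.inl (otherEnd src tgt b i)) (Sum.inr a))
      (hdeg j) b
  have hvertex : ∀ j m, R (Sum.inl j, Sum.inl m) = 0 := fun j m ↦ by
    obtain ⟨a, ha⟩ := exists_signedIncidence_ne_zero (k := k) (Nat.lt_of_lt_of_le two_pos (hdeg j))
    have h := hG.repr_inr_inl_of_invariant (hinv (B (Sum.inl (otherEnd src tgt a j)))) a m
    rw [otherEnd_otherEnd hG.loopless ha, signedIncidence_otherEnd hG.loopless ha] at h
    exact (mul_eq_zero.mp h).resolve_left (neg_ne_zero.mpr ha)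
  refine (mem_tsub_edgeSpan_iff B ω).mpr fun j p ↦ ?_
  rcases p with m | b
  · exact ⟨hvertex j m, hvertex m j⟩
  · exact ⟨hmixed j b, by rw [hswap, hmixed, neg_zero]⟩

/-- At a leaf `e` with edge `a₀`, every `⁅x, e_e⁆` is a multiple of the central `z_{a₀}`, so
`e_e ∧ z_{a₀}` is invariant. -/
theorem exists_invariant_not_mem_of_deg_eq_one {e : V} (he : deg src tgt e = 1) :
    ∃ ω : N ⊗[k] N, TensorProduct.comm k N N ω = -ω ∧ (∀ x, tAct k N x ω = 0) ∧
      ω ∉ tsub k N (edgeSpan B) (edgeSpan B) := by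
  obtain ⟨a₀, ha₀⟩ := Finset.card_eq_one.mp he
  have hleaf : ∀ a, a ≠ a₀ → signedIncidence k src tgt a e = 0 := fun a ha ↦ by
    by_contra h
    have : a ∈ Finset.univ.filter (fun a ↦ src a = e ∨ tgt a = e) :=
      Finset.mem_filter.mpr ⟨Finset.mem_univ a, signedIncidence_ne_zero_iff.mp h⟩
    exact ha (by simpa [ha₀] using this)
  have hlie : ∀ x, ∃ t : k, ⁅x, B (Sum.inl e)⁆ = t • B (Sum.inr a₀) := fun x ↦ by
    refine ⟨-(signedIncidence k src tgt a₀ e * B.coord (Sum.inl (otherEnd src tgt a₀ e)) x), ?_⟩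
    rw [← lie_skew, ← LieAlgebra.ad_apply (R := k), hG.ad_inl, LinearMap.sum_apply,
      Finset.sum_eq_single a₀ (fun a _ ha ↦ by simp [hleaf a ha]) (by simp)]
    simp [neg_smul]
  have hz : ∀ x, ⁅x, B (Sum.inr a₀)⁆ = 0 := fun x ↦ by rw [← lie_skew, hG.lie_inr, neg_zero]
  refine ⟨B (Sum.inl e) ⊗ₜ B (Sum.inr a₀) - B (Sum.inr a₀) ⊗ₜ B (Sum.inl e), by simp,
    fun x ↦ ?_, fun hmem ↦ ?_⟩
  · obtain ⟨t, ht⟩ := hlie x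
    simp [tAct, ht, hz, smul_tmul]
  · have := ((mem_tsub_edgeSpan_iff B _).mp hmem e (Sum.inr a₀)).1
    simp at this

end IsGraphAlgebraBasis

end GraphAlgebra

theorem stmt10_general (k V A N : Type*) [Field k] [CharZero k]
    [Fintype A] [DecidableEq V]
    [LieRing N] [LieAlgebra k N]
    (src tgt : A → V)
    (hloop : ∀ a, src a ≠ tgt a)
    (hsimple : ∀ a b : A,
      (src a = src b ∧ tgt a = tgt b) ∨ (src a = tgt b ∧ tgt a = src b) → a = b)
    (B : Module.Basis (V ⊕ A) k N)
    (hbz : ∀ (a : A) (x : N), ⁅B (Sum.inr a), x⁆ = 0)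
    (hbe : ∀ a : A, ⁅B (Sum.inl (src a)), B (Sum.inl (tgt a))⁆ = B (Sum.inr a))
    (hbe0 : ∀ i j : V,
      (∀ a : A, ¬((src a = i ∧ tgt a = j) ∨ (src a = j ∧ tgt a = i))) →
      ⁅B (Sum.inl i), B (Sum.inl j)⁆ = 0)
    (hnoiso : ∀ e : V, 0 < deg src tgt e) :
    (∀ ω : N ⊗[k] N, TensorProduct.comm k N N ω = -ω →
      ((∀ x : N, tAct k N x ω = 0) ↔
        ω ∈ tsub k N (Submodule.span k (Set.range fun a : A => B (Sum.inr a)))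
              (Submodule.span k (Set.range fun a : A => B (Sum.inr a)))))
    ↔ (∀ e : V, 2 ≤ deg src tgt e) := by
  have hG : IsGraphAlgebraBasis src tgt B := ⟨hloop, hsimple, hbz, hbe, hbe0⟩
  constructor
  · intro H e
    by_contra he
    obtain ⟨ω, hskew, hinv, hω⟩ :=
      hG.exists_invariant_not_mem_of_deg_eq_one (e := e) (by have := hnoiso e; omega)
    exact hω ((H ω hskew).mp hinv)
  · intro hdeg ω hskew
    exact ⟨hG.mem_tsub_edgeSpan_of_invariant hdeg hskew,
      fun hω x ↦ hG.tAct_eq_zero_of_mem_tsub_edgeSpan x hω⟩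

/-- for the graph algebra `n = n(G) = W ⊕ z` of a finite simple graph
without isolated vertices, `(Λ²n)^n = Λ²z` (every antisymmetric invariant tensor lies in
`z ⊗ z`, and conversely) if and only if every vertex of `G` has degree at least 2. -/
theorem stmt10 (k V A N : Type*) [Field k] [CharZero k]
    [Fintype V] [Fintype A] [DecidableEq V] [DecidableEq A]
    [LieRing N] [LieAlgebra k N]
    (src tgt : A → V)
    (hloop : ∀ a, src a ≠ tgt a)
    (hsimple : ∀ a b : A,
      (src a = src b ∧ tgt a = tgt b) ∨ (src a = tgt b ∧ tgt a = src b) → a = b)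
    (B : Module.Basis (V ⊕ A) k N)
    (hbz : ∀ (a : A) (x : N), ⁅B (Sum.inr a), x⁆ = 0)
    (hbe : ∀ a : A, ⁅B (Sum.inl (src a)), B (Sum.inl (tgt a))⁆ = B (Sum.inr a))
    (hbe0 : ∀ i j : V,
      (∀ a : A, ¬((src a = i ∧ tgt a = j) ∨ (src a = j ∧ tgt a = i))) →
      ⁅B (Sum.inl i), B (Sum.inl j)⁆ = 0)
    (hnoiso : ∀ e : V, 0 < deg src tgt e) :
    (∀ ω : N ⊗[k] N, TensorProduct.comm k N N ω = -ω →
      ((∀ x : N, tAct k N x ω = 0) ↔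
        ω ∈ tsub k N (Submodule.span k (Set.range fun a : A => B (Sum.inr a)))
              (Submodule.span k (Set.range fun a : A => B (Sum.inr a)))))
    ↔ (∀ e : V, 2 ≤ deg src tgt e) :=
  stmt10_general k V A N src tgt hloop hsimple B hbz hbe hbe0 hnoiso
end

section
/- Let G = (V,A) be a finite simple graph, n(G) = W ⊕ z its graph algebra over a field k of characteristic zero, and for each edge α let T_α : W → W* be given by T_α(e_i) = e_j*, T_α(e_j) = −e_i*, T_α(e_k) = 0 for k ≠ i,j, where α joins i < j. Let S : W* → W be an antisymmetric linear map satisfying T_α S T_β + T_β S T_α = 0 for all α, β ∈ A, and write S(e_j*) = Σ_i S_{i,j} e_i. If two vertices i and j are joined by an edge of G, then S_{i,j} = 0. -/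
/-- let `G = (V,A)` be a finite simple graph with graph algebra
`n(G) = W ⊕ z`, where `W = V → k` with the vertex basis, and for each edge `α` joining
`i < j` let `T_α : W → W*` be the antisymmetric map with `T_α(e_i) = e_j*`,
`T_α(e_j) = -e_i*`, `T_α(e_k) = 0` otherwise (equivalently
`T_α(v)(w) = v_{src α} w_{tgt α} − v_{tgt α} w_{src α}`).  If `S : W* → W` is an
antisymmetric solution of `T_α S T_β + T_β S T_α = 0` for all `α, β ∈ A`, and the
vertices `i` and `j` are joined by an edge of `G`, then `S_{i,j} = S(e_j*)_i = 0`. -/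
theorem stmt11 (k V A : Type*) [Field k] [CharZero k] [Fintype V] [Fintype A]
    (src tgt : A → V)
    (hloop : ∀ a, src a ≠ tgt a)
    (hsimple : ∀ a b : A,
      (src a = src b ∧ tgt a = tgt b) ∨ (src a = tgt b ∧ tgt a = src b) → a = b)
    (T : A → ((V → k) →ₗ[k] Module.Dual k (V → k)))
    (hT : ∀ (a : A) (v w : V → k),
      T a v w = v (src a) * w (tgt a) - v (tgt a) * w (src a))
    (S : Module.Dual k (V → k) →ₗ[k] (V → k))
    (hSanti : ∀ f h : Module.Dual k (V → k), f (S h) = - h (S f))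
    (hTST : ∀ a b : A, (T a).comp (S.comp (T b)) + (T b).comp (S.comp (T a)) = 0) :
    ∀ (a : A) (i j : V),
      ((i = src a ∧ j = tgt a) ∨ (i = tgt a ∧ j = src a)) →
      S (LinearMap.proj j) i = 0 := by
  classical
  intro a i j hij
  have key : ∀ v w : V → k, T a (S (T a v)) w = 0 := by
    intro v w
    have h := LinearMap.congr_fun (LinearMap.congr_fun (hTST a a) v) w
    simp only [LinearMap.add_apply, LinearMap.comp_apply, LinearMap.zero_apply] at h
    exact add_self_eq_zero.mp h
  rcases hij with ⟨hi, hj⟩ | ⟨hi, hj⟩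
  · subst hi; subst hj
    have h1 : (LinearMap.proj (tgt a) : (V → k) →ₗ[k] k)
        = T a (Pi.single (src a) 1) := by
      refine LinearMap.ext fun w => ?_
      rw [hT]
      simp [Pi.single_apply, (hloop a).symm]
    have h2 := key (Pi.single (src a) 1) (Pi.single (tgt a) 1)
    rw [hT] at h2
    rw [h1]
    simpa [Pi.single_apply, hloop a] using h2
  · subst hi; subst hj
    have h1 : (LinearMap.proj (src a) : (V → k) →ₗ[k] k)
        = - T a (Pi.single (tgt a) 1) := by
      refine LinearMap.ext fun w => ?_
      rw [LinearMap.neg_apply, hT]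
      simp [Pi.single_apply, hloop a]
    have h2 := key (Pi.single (tgt a) 1) (Pi.single (src a) 1)
    rw [hT] at h2
    rw [h1]
    simp only [map_neg, Pi.neg_apply, neg_eq_zero]
    simpa [Pi.single_apply, (hloop a).symm] using h2
end

section
/- Let G = (V,A) be a finite simple graph, n(G) = W ⊕ z its graph algebra over a field k of characteristic zero, and T_α : W → W* for α ∈ A as determined by the bracket. Let S : W* → W be an antisymmetric linear map satisfying T_α S T_β + T_β S T_α = 0 for all α, β ∈ A, and write S(e_j*) = Σ_i S_{i,j} e_i. If there are edges α joining vertices i and i′ and β joining vertices j and j′ with {i,i′} ∩ {j,j′} = ∅, then S_{i,j} = 0. -/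
/-- let `G = (V,A)` be a finite simple graph with graph algebra
`n(G) = W ⊕ z`, `W = V → k` with the vertex basis, and `T_α : W → W*` the maps determined
by the bracket (`T_α(v)(w) = v_{src α} w_{tgt α} − v_{tgt α} w_{src α}`).  If `S : W* → W`
is an antisymmetric solution of `T_α S T_β + T_β S T_α = 0` for all `α, β ∈ A`, and there
are edges `α` joining `i, i′` and `β` joining `j, j′` with `{i,i′} ∩ {j,j′} = ∅`, then
`S_{i,j} = S(e_j*)_i = 0`. -/
theorem stmt12 (k V A : Type*) [Field k] [CharZero k] [Fintype V] [Fintype A]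
    (src tgt : A → V)
    (hloop : ∀ a, src a ≠ tgt a)
    (hsimple : ∀ a b : A,
      (src a = src b ∧ tgt a = tgt b) ∨ (src a = tgt b ∧ tgt a = src b) → a = b)
    (T : A → ((V → k) →ₗ[k] Module.Dual k (V → k)))
    (hT : ∀ (a : A) (v w : V → k),
      T a v w = v (src a) * w (tgt a) - v (tgt a) * w (src a))
    (S : Module.Dual k (V → k) →ₗ[k] (V → k))
    (hSanti : ∀ f h : Module.Dual k (V → k), f (S h) = - h (S f))
    (hTST : ∀ a b : A, (T a).comp (S.comp (T b)) + (T b).comp (S.comp (T a)) = 0) :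
    ∀ (a b : A) (i i' j j' : V),
      ((i = src a ∧ i' = tgt a) ∨ (i = tgt a ∧ i' = src a)) →
      ((j = src b ∧ j' = tgt b) ∨ (j = tgt b ∧ j' = src b)) →
      i ≠ j → i ≠ j' → i' ≠ j → i' ≠ j' →
      S (LinearMap.proj j) i = 0 := by
  classical
  intro a b i i' j j' hi hj h1 h2 h3 h4
  have hS : ∀ (c : A) (v : V → k) (x : V), S (T c v) x =
      v (src c) * S (LinearMap.proj (tgt c)) x - v (tgt c) * S (LinearMap.proj (src c)) x := by
    intro c v x
    have hc : T c v = v (src c) • (LinearMap.proj (tgt c) : Module.Dual k (V → k))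
        - v (tgt c) • (LinearMap.proj (src c) : Module.Dual k (V → k)) := by
      refine LinearMap.ext fun w => ?_
      rw [hT]
      simp [LinearMap.proj_apply]
    rw [hc, map_sub, map_smul, map_smul]
    simp
  have key : ∀ v w : V → k, T a (S (T b v)) w + T b (S (T a v)) w = 0 := by
    intro v w
    have h := LinearMap.congr_fun (LinearMap.congr_fun (hTST a b) v) w
    simpa using h
  have la := hloop a
  have lb := hloop b
  obtain ⟨d1, d2, d3, d4⟩ :
      src a ≠ src b ∧ src a ≠ tgt b ∧ tgt a ≠ src b ∧ tgt a ≠ tgt b := by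
    rcases hi with ⟨rfl, rfl⟩ | ⟨rfl, rfl⟩ <;> rcases hj with ⟨rfl, rfl⟩ | ⟨rfl, rfl⟩ <;>
      exact ⟨by assumption, by assumption, by assumption, by assumption⟩
  have m1 : S (LinearMap.proj (src b)) (src a) = 0 := by
    have hk := key (Pi.single (tgt b) (1:k)) (Pi.single (tgt a) (1:k))
    simp only [hT, hS] at hk
    simp [Pi.single_apply, la, lb, la.symm, lb.symm, d1, d2, d3, d4,
      d1.symm, d2.symm, d3.symm, d4.symm] at hk
    exact hk
  have m2 : S (LinearMap.proj (tgt b)) (src a) = 0 := by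
    have hk := key (Pi.single (src b) (1:k)) (Pi.single (tgt a) (1:k))
    simp only [hT, hS] at hk
    simp [Pi.single_apply, la, lb, la.symm, lb.symm, d1, d2, d3, d4,
      d1.symm, d2.symm, d3.symm, d4.symm] at hk
    exact hk
  have m3 : S (LinearMap.proj (src b)) (tgt a) = 0 := by
    have hk := key (Pi.single (tgt b) (1:k)) (Pi.single (src a) (1:k))
    simp only [hT, hS] at hk
    simp [Pi.single_apply, la, lb, la.symm, lb.symm, d1, d2, d3, d4,
      d1.symm, d2.symm, d3.symm, d4.symm] at hk
    exact hk
  have m4 : S (LinearMap.proj (tgt b)) (tgt a) = 0 := by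
    have hk := key (Pi.single (src b) (1:k)) (Pi.single (src a) (1:k))
    simp only [hT, hS] at hk
    simp [Pi.single_apply, la, lb, la.symm, lb.symm, d1, d2, d3, d4,
      d1.symm, d2.symm, d3.symm, d4.symm] at hk
    exact hk
  rcases hi with ⟨rfl, rfl⟩ | ⟨rfl, rfl⟩ <;> rcases hj with ⟨rfl, rfl⟩ | ⟨rfl, rfl⟩ <;>
    assumption
end

section
/- Let G = (V,A) be a finite simple graph without isolated vertices and n = n(G) = W ⊕ z its graph algebra over a field k of characteristic zero. Let δ : n → Λ²n be any linear map with δ(z) = 0 for z ∈ z and δ(e_i) ∈ Λ²z for every vertex i, i.e. δ(e_i) = Σ_{α,β∈A} μ_i^{α,β} α∧β with arbitrary coefficients satisfying μ_i^{α,β} = −μ_i^{β,α}. Then δ is a Lie bialgebra structure on n, and it is nearly coboundary. -/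
/-!
Both structure maps of `n` land in the centre: `δ` maps `n` into `z ⊗ z` (it kills `z` and sends
each `e_i` into `z ⊗ z`), and `⁅n, n⁆ ⊆ z` since the brackets of basis vectors are edges or zero.
Because `z` is central, `n` acts trivially on `z ⊗ z`, and because `δ` kills `z`, `δ ⊗ id` kills
`z ⊗ z`. Hence both sides of the cocycle identity and every term of co-Jacobi vanish, while
antisymmetry only has to be checked on the basis, where `δ(e_i)` is a combination of wedges.
-/

open TensorProduct

open Submodule in
theorem tAct_eq_zero_of_mem_map₂ {k N : Type*} [CommRing k] [LieRing N] [LieAlgebra k N]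
    {Z : Submodule k N} (hZ : ∀ z ∈ Z, ∀ x : N, ⁅x, z⁆ = 0)
    {t : N ⊗[k] N} (ht : t ∈ map₂ (TensorProduct.mk k N N) Z Z) (x : N) :
    tAct k N x t = 0 := by
  refine (map₂_le (r := LinearMap.ker (tAct k N x))).mpr (fun a ha b hb => ?_) ht
  simp [tAct, hZ a ha, hZ b hb]

open Submodule in
theorem map_id_eq_zero_of_mem_map₂ {k N P : Type*} [CommRing k] [AddCommMonoid N] [Module k N]
    [AddCommMonoid P] [Module k P] {Z : Submodule k N} {f : N →ₗ[k] P}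
    (hf : ∀ z ∈ Z, f z = 0) {t : N ⊗[k] N} (ht : t ∈ map₂ (TensorProduct.mk k N N) Z Z) :
    TensorProduct.map f LinearMap.id t = 0 := by
  refine (map₂_le (r := LinearMap.ker (TensorProduct.map f LinearMap.id))).mpr
    (fun a ha b _ => ?_) ht
  simp [hf a ha]

theorem Module.Basis.apply_mem_of_forall {ι k M P : Type*} [CommRing k] [AddCommMonoid M]
    [Module k M] [AddCommMonoid P] [Module k P] (b : Module.Basis ι k M) {f : M →ₗ[k] P}
    {p : Submodule k P} (h : ∀ i, f (b i) ∈ p) (x : M) : f x ∈ p :=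
  (Submodule.map_span_le f _ p).mpr (by rintro _ ⟨i, rfl⟩; exact h i)
    (Submodule.mem_map_of_mem (b.mem_span x))

theorem Module.Basis.lie_mem_of_forall {ι k N : Type*} [CommRing k] [LieRing N] [LieAlgebra k N]
    (b : Module.Basis ι k N) {p : Submodule k N} (h : ∀ i j, ⁅b i, b j⁆ ∈ p) (x y : N) :
    ⁅x, y⁆ ∈ p := by
  have hbil : ((LieAlgebra.ad k N : N →ₗ[k] Module.End k N)).compr₂ p.mkQ = 0 :=
    LinearMap.ext_basis b b fun i j => by simpa using h i j
  simpa using LinearMap.congr_fun₂ hbil x y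

theorem TensorProduct.comm_tmul_sub_tmul {k N : Type*} [CommRing k] [AddCommGroup N]
    [Module k N] (a b : N) :
    TensorProduct.comm k N N (a ⊗ₜ b - b ⊗ₜ a) = -(a ⊗ₜ b - b ⊗ₜ a) := by
  simp


theorem lie_eq_zero_of_mem_span {k N : Type*} [CommRing k] [LieRing N] [LieAlgebra k N]
    {s : Set N} (hs : ∀ z ∈ s, ∀ x : N, ⁅x, z⁆ = 0) {z : N} (hz : z ∈ Submodule.span k s)
    (x : N) : ⁅x, z⁆ = 0 := by
  have hle : Submodule.span k s ≤ (LieAlgebra.center k N).toSubmodule :=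
    Submodule.span_le.mpr fun z hz => (LieModule.mem_maxTrivSubmodule k N N z).mpr (hs z hz)
  exact (LieModule.mem_maxTrivSubmodule k N N z).mp (hle hz) x

section GraphAlgebra

variable {k V A N : Type*} [CommRing k] [LieRing N] [LieAlgebra k N]
  {src tgt : A → V} {B : Module.Basis (V ⊕ A) k N}

theorem lie_basis_mem_span_edges (hbz : ∀ (a : A) (x : N), ⁅B (Sum.inr a), x⁆ = 0)
    (hbe : ∀ a : A, ⁅B (Sum.inl (src a)), B (Sum.inl (tgt a))⁆ = B (Sum.inr a))
    (hbe0 : ∀ i j : V,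
      (∀ a : A, ¬((src a = i ∧ tgt a = j) ∨ (src a = j ∧ tgt a = i))) →
      ⁅B (Sum.inl i), B (Sum.inl j)⁆ = 0) (v w : V ⊕ A) :
    ⁅B v, B w⁆ ∈ Submodule.span k (Set.range fun a : A => B (Sum.inr a)) := by
  rcases v with i | a
  · rcases w with j | a
    · by_cases hadj : ∃ a : A, (src a = i ∧ tgt a = j) ∨ (src a = j ∧ tgt a = i)
      · obtain ⟨a, ⟨rfl, rfl⟩ | ⟨rfl, rfl⟩⟩ := hadj
        · rw [hbe]
          exact Submodule.subset_span ⟨a, rfl⟩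
        · rw [← lie_skew, hbe]
          exact Submodule.neg_mem _ (Submodule.subset_span ⟨a, rfl⟩)
      · rw [hbe0 i j (not_exists.mp hadj)]
        exact Submodule.zero_mem _
    · rw [← lie_skew, hbz, neg_zero]
      exact Submodule.zero_mem _
  · rw [hbz]
    exact Submodule.zero_mem _

variable [Fintype A] {μ : V → A → A → k} {δ : N →ₗ[k] N ⊗[k] N}

theorem apply_mem_map₂_span_edges
    (hδz : ∀ z ∈ Submodule.span k (Set.range fun a : A => B (Sum.inr a)), δ z = 0)
    (hδe : ∀ i : V, δ (B (Sum.inl i)) = ∑ a : A, ∑ b : A,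
      μ i a b • (B (Sum.inr a) ⊗ₜ[k] B (Sum.inr b) - B (Sum.inr b) ⊗ₜ[k] B (Sum.inr a)))
    (x : N) :
    δ x ∈ Submodule.map₂ (TensorProduct.mk k N N)
      (Submodule.span k (Set.range fun a : A => B (Sum.inr a)))
      (Submodule.span k (Set.range fun a : A => B (Sum.inr a))) := by
  refine B.apply_mem_of_forall (fun v => ?_) x
  rcases v with i | a
  · rw [hδe i]
    refine Submodule.sum_mem _ fun a _ => Submodule.sum_mem _ fun b _ =>
      Submodule.smul_mem _ _ (Submodule.sub_mem _ ?_ ?_) <;>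
    exact Submodule.apply_mem_map₂ _ (Submodule.subset_span ⟨_, rfl⟩)
      (Submodule.subset_span ⟨_, rfl⟩)
  · rw [hδz _ (Submodule.subset_span ⟨a, rfl⟩)]
    exact Submodule.zero_mem _

theorem comm_apply_eq_neg
    (hδz : ∀ z ∈ Submodule.span k (Set.range fun a : A => B (Sum.inr a)), δ z = 0)
    (hδe : ∀ i : V, δ (B (Sum.inl i)) = ∑ a : A, ∑ b : A,
      μ i a b • (B (Sum.inr a) ⊗ₜ[k] B (Sum.inr b) - B (Sum.inr b) ⊗ₜ[k] B (Sum.inr a)))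
    (x : N) :
    TensorProduct.comm k N N (δ x) = -δ x := by
  refine LinearMap.congr_fun (B.ext (f₁ := (TensorProduct.comm k N N).toLinearMap ∘ₗ δ)
    (f₂ := -δ) fun v => ?_) x
  rcases v with i | a
  · simp only [LinearMap.coe_comp, Function.comp_apply, LinearEquiv.coe_coe, hδe i, map_sum,
      map_smul, TensorProduct.comm_tmul_sub_tmul, smul_neg, Finset.sum_neg_distrib,
      LinearMap.neg_apply]
  · simp [hδz _ (Submodule.subset_span ⟨a, rfl⟩)]

end GraphAlgebra

theorem stmt14_general (k V A N : Type*) [Field k] [Fintype A] [LieRing N] [LieAlgebra k N]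
    (src tgt : A → V)
    (B : Module.Basis (V ⊕ A) k N)
    (hbz : ∀ (a : A) (x : N), ⁅B (Sum.inr a), x⁆ = 0)
    (hbe : ∀ a : A, ⁅B (Sum.inl (src a)), B (Sum.inl (tgt a))⁆ = B (Sum.inr a))
    (hbe0 : ∀ i j : V,
      (∀ a : A, ¬((src a = i ∧ tgt a = j) ∨ (src a = j ∧ tgt a = i))) →
      ⁅B (Sum.inl i), B (Sum.inl j)⁆ = 0)
    (μ : V → A → A → k)
    (δ : N →ₗ[k] N ⊗[k] N)
    (hδz : ∀ z ∈ Submodule.span k (Set.range fun a : A => B (Sum.inr a)), δ z = 0)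
    (hδe : ∀ i : V, δ (B (Sum.inl i)) = ∑ a : A, ∑ b : A,
      μ i a b • (B (Sum.inr a) ⊗ₜ[k] B (Sum.inr b) - B (Sum.inr b) ⊗ₜ[k] B (Sum.inr a))) :
    -- δ is a Lie bialgebra structure on n:
    ((∀ x, TensorProduct.comm k N N (δ x) = - δ x)
      ∧ (∀ x, (TensorProduct.map δ LinearMap.id) (δ x)
          + tCyc k N ((TensorProduct.map δ LinearMap.id) (δ x))
          + tCyc k N (tCyc k N ((TensorProduct.map δ LinearMap.id) (δ x))) = 0)
      ∧ (∀ x y, δ ⁅x, y⁆ = tAct k N x (δ y) - tAct k N y (δ x)))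
    -- and it is nearly coboundary:
    ∧ (∀ z ∈ Submodule.span k (Set.range fun a : A => B (Sum.inr a)), δ z = 0) := by
  have hcentral : ∀ z ∈ Submodule.span k (Set.range fun a : A => B (Sum.inr a)),
      ∀ x : N, ⁅x, z⁆ = 0 :=
    fun z => lie_eq_zero_of_mem_span (by rintro _ ⟨a, rfl⟩ x; rw [← lie_skew, hbz, neg_zero])
  have hδZ := apply_mem_map₂_span_edges hδz hδe
  refine ⟨⟨comm_apply_eq_neg hδz hδe, fun x => ?_, fun x y => ?_⟩, hδz⟩
  · simp [map_id_eq_zero_of_mem_map₂ hδz (hδZ x)]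
  · rw [tAct_eq_zero_of_mem_map₂ hcentral (hδZ y), tAct_eq_zero_of_mem_map₂ hcentral (hδZ x),
      sub_zero]
    exact hδz _ (B.lie_mem_of_forall (lie_basis_mem_span_edges hbz hbe hbe0) x y)

/-- for the graph algebra `n = n(G) = W ⊕ z` of a finite simple graph
without isolated vertices, any linear map `δ : n → Λ²n` vanishing on `z` and with
`δ(e_i) = Σ_{α,β} μ_i^{α,β} α∧β ∈ Λ²z` (coefficients only required to satisfy
`μ_i^{α,β} = −μ_i^{β,α}`; each wedge `α∧β` modelled as `α⊗β − β⊗α`) is a Lie bialgebra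
structure on `n`, and it is nearly coboundary. -/
theorem stmt14 (k V A N : Type*) [Field k] [CharZero k]
    [Fintype V] [Fintype A] [DecidableEq V] [DecidableEq A]
    [LieRing N] [LieAlgebra k N]
    (src tgt : A → V)
    (hloop : ∀ a, src a ≠ tgt a)
    (hsimple : ∀ a b : A,
      (src a = src b ∧ tgt a = tgt b) ∨ (src a = tgt b ∧ tgt a = src b) → a = b)
    (B : Module.Basis (V ⊕ A) k N)
    (hbz : ∀ (a : A) (x : N), ⁅B (Sum.inr a), x⁆ = 0)
    (hbe : ∀ a : A, ⁅B (Sum.inl (src a)), B (Sum.inl (tgt a))⁆ = B (Sum.inr a))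
    (hbe0 : ∀ i j : V,
      (∀ a : A, ¬((src a = i ∧ tgt a = j) ∨ (src a = j ∧ tgt a = i))) →
      ⁅B (Sum.inl i), B (Sum.inl j)⁆ = 0)
    (hnoiso : ∀ e : V,
      0 < (Finset.univ.filter (fun a : A => src a = e ∨ tgt a = e)).card)
    (μ : V → A → A → k)
    (hμanti : ∀ i a b, μ i a b = - μ i b a)
    (δ : N →ₗ[k] N ⊗[k] N)
    (hδz : ∀ z ∈ Submodule.span k (Set.range fun a : A => B (Sum.inr a)), δ z = 0)
    (hδe : ∀ i : V, δ (B (Sum.inl i)) = ∑ a : A, ∑ b : A,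
      μ i a b • (B (Sum.inr a) ⊗ₜ[k] B (Sum.inr b) - B (Sum.inr b) ⊗ₜ[k] B (Sum.inr a))) :
    -- δ is a Lie bialgebra structure on n:
    ((∀ x, TensorProduct.comm k N N (δ x) = - δ x)
      ∧ (∀ x, (TensorProduct.map δ LinearMap.id) (δ x)
          + tCyc k N ((TensorProduct.map δ LinearMap.id) (δ x))
          + tCyc k N (tCyc k N ((TensorProduct.map δ LinearMap.id) (δ x))) = 0)
      ∧ (∀ x y, δ ⁅x, y⁆ = tAct k N x (δ y) - tAct k N y (δ x)))
    -- and it is nearly coboundary: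
    ∧ (∀ z ∈ Submodule.span k (Set.range fun a : A => B (Sum.inr a)), δ z = 0) :=
  stmt14_general k V A N src tgt B hbz hbe hbe0 μ δ hδz hδe
end

section
/- Let G = (V,A) be a finite simple graph in which every vertex has degree at least 2, n = n(G) = W ⊕ z its graph algebra over a field k of characteristic zero, and δ a nearly coboundary Lie bialgebra structure on n (δ|_z = 0). Write δ(v) = Σ_{α∈A} D_α(v)∧α + Φ*(v) for v ∈ W, with linear maps D_α : W → W and Φ* : W → Λ²z. Then D_α D_β = D_β D_α for all edges α, β ∈ A. -/
open TensorProduct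

set_option synthInstance.maxHeartbeats 1000000
set_option maxHeartbeats 1000000

/-!
Pair the co-Jacobi identity for `v ∈ W` with the functional `e_i* ⊗ α* ⊗ β*` and its two
cyclic rotations, where `e_i*` kills `z` and `α*, β*` are dual to the edges `α, β`.
Since `δ` kills `z` and `Φ*(v) ∈ z ⊗ z`, we get `(δ ⊗ id) δ v = Σ_γ δ(D_γ v) ⊗ γ`, and the
three pairings evaluate to `e_i*(D_α D_β v)`, `0` and `-e_i*(D_β D_α v)`.  Hence `D_α D_β v`
and `D_β D_α v` have the same coordinates along every vertex, and both lie in `W`.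
-/

open Module

section Pairing

variable {k N : Type*} [CommRing k] [AddCommGroup N] [Module k N]

noncomputable def dualTriple (f g h : Dual k N) : Dual k ((N ⊗[k] N) ⊗[k] N) :=
  dualDistrib k (N ⊗[k] N) N (dualDistrib k N N (f ⊗ₜ g) ⊗ₜ h)

lemma dualTriple_tmul (f g h : Dual k N) (t : N ⊗[k] N) (z : N) :
    dualTriple f g h (t ⊗ₜ z) = dualDistrib k N N (f ⊗ₜ g) t * h z :=
  dualDistrib_apply _ _ _ _

lemma dualTriple_tCyc (f g h : Dual k N) (t : (N ⊗[k] N) ⊗[k] N) :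
    dualTriple f g h (tCyc k N t) = dualTriple g h f t := by
  suffices (dualTriple f g h).comp (tCyc k N) = dualTriple g h f from LinearMap.congr_fun this t
  refine TensorProduct.ext_threefold fun x y z => ?_
  simp only [LinearMap.comp_apply, tCyc, LinearEquiv.coe_coe, comm_tmul, assoc_symm_tmul,
    dualTriple_tmul, dualDistrib_apply]
  ring

lemma dualTriple_cyclic_sum_eq_zero {t : (N ⊗[k] N) ⊗[k] N}
    (ht : t + tCyc k N t + tCyc k N (tCyc k N t) = 0) (f g h : Dual k N) :
    dualTriple f g h t + dualTriple g h f t + dualTriple h f g t = 0 := by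
  simpa only [map_add, map_zero, dualTriple_tCyc] using congrArg (dualTriple f g h) ht

lemma dualDistrib_eq_zero_of_mem_tsub_left {P Q : Submodule k N} {f : Dual k N}
    (hf : ∀ x ∈ P, f x = 0) (g : Dual k N) {t : N ⊗[k] N} (ht : t ∈ tsub k N P Q) :
    dualDistrib k N N (f ⊗ₜ g) t = 0 := by
  obtain ⟨s, rfl⟩ := ht
  induction s using TensorProduct.induction_on with
  | zero => simp
  | tmul x y => simp [dualDistrib_apply, hf x x.2]
  | add s s' hs hs' => simp [hs, hs']

lemma dualDistrib_eq_zero_of_mem_tsub_right {P Q : Submodule k N} (f : Dual k N)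
    {g : Dual k N} (hg : ∀ y ∈ Q, g y = 0) {t : N ⊗[k] N} (ht : t ∈ tsub k N P Q) :
    dualDistrib k N N (f ⊗ₜ g) t = 0 := by
  obtain ⟨s, rfl⟩ := ht
  induction s using TensorProduct.induction_on with
  | zero => simp
  | tmul x y => simp [dualDistrib_apply, hg y y.2]
  | add s s' hs hs' => simp [hs, hs']

lemma map_id_eq_zero_of_mem_tsub {P Q : Submodule k N} {δ : N →ₗ[k] N ⊗[k] N}
    (hδ : ∀ x ∈ P, δ x = 0) {t : N ⊗[k] N} (ht : t ∈ tsub k N P Q) :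
    TensorProduct.map δ LinearMap.id t = 0 := by
  obtain ⟨s, rfl⟩ := ht
  induction s using TensorProduct.induction_on with
  | zero => simp
  | tmul x y => simp [hδ x x.2]
  | add s s' hs hs' => simp [hs, hs']

end Pairing

section NearlyCoboundary

variable {k N A : Type*} [CommRing k] [AddCommGroup N] [Module k N] [Fintype A]
  {δ : N →ₗ[k] N ⊗[k] N} {W Z : Submodule k N} {z : A → N} {D : A → W →ₗ[k] W}
  {P : W → N ⊗[k] N}

variable (δ z D P) in
def IsWedgeDecomposition : Prop :=
  ∀ v : W, δ (v : N) = ∑ a, (((D a v : W) : N) ⊗ₜ[k] z a - z a ⊗ₜ[k] ((D a v : W) : N)) + P v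

lemma map_id_delta_eq_sum (hδ : ∀ x ∈ Z, δ x = 0) (hz : ∀ a, z a ∈ Z)
    (hP : ∀ v, P v ∈ tsub k N Z Z)
    (hform : IsWedgeDecomposition δ z D P)
    (v : W) :
    TensorProduct.map δ LinearMap.id (δ v) = ∑ a, δ (D a v : N) ⊗ₜ[k] z a := by
  rw [hform v, map_add, map_id_eq_zero_of_mem_tsub hδ (hP v), add_zero, map_sum]
  refine Finset.sum_congr rfl fun a _ => ?_
  simp [hδ _ (hz a)]

lemma dualDistrib_delta_eq_sum_left (hz : ∀ a, z a ∈ Z) (hP : ∀ v, P v ∈ tsub k N Z Z)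
    (hform : IsWedgeDecomposition δ z D P)
    {f : Dual k N} (hf : ∀ x ∈ Z, f x = 0) (g : Dual k N) (w : W) :
    dualDistrib k N N (f ⊗ₜ g) (δ w) = ∑ a, f (D a w : N) * g (z a) := by
  rw [hform w, map_add, dualDistrib_eq_zero_of_mem_tsub_left hf g (hP w), add_zero, map_sum]
  simp [dualDistrib_apply, hf _ (hz _)]

lemma dualDistrib_delta_eq_sum_right (hz : ∀ a, z a ∈ Z) (hP : ∀ v, P v ∈ tsub k N Z Z)
    (hform : IsWedgeDecomposition δ z D P)
    (f : Dual k N) {g : Dual k N} (hg : ∀ x ∈ Z, g x = 0) (w : W) :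
    dualDistrib k N N (f ⊗ₜ g) (δ w) = - ∑ a, f (z a) * g (D a w : N) := by
  rw [hform w, map_add, dualDistrib_eq_zero_of_mem_tsub_right f hg (hP w), add_zero, map_sum]
  simp [dualDistrib_apply, hg _ (hz _)]

theorem apply_comp_apply_comm [DecidableEq A] (hδ : ∀ x ∈ Z, δ x = 0) (hz : ∀ a, z a ∈ Z)
    (hP : ∀ v, P v ∈ tsub k N Z Z)
    (hform : IsWedgeDecomposition δ z D P)
    {v : W} (hcoJ : TensorProduct.map δ LinearMap.id (δ v)
        + tCyc k N (TensorProduct.map δ LinearMap.id (δ v))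
        + tCyc k N (tCyc k N (TensorProduct.map δ LinearMap.id (δ v))) = 0)
    {f : Dual k N} (hf : ∀ x ∈ Z, f x = 0) {e : A → Dual k N}
    (he : ∀ a b, e a (z b) = if a = b then 1 else 0) (a b : A) :
    f (D a (D b v) : N) = f (D b (D a v) : N) := by
  have h₁ : dualTriple f (e a) (e b) (TensorProduct.map δ LinearMap.id (δ v))
      = f (D a (D b v) : N) := by
    simp [map_id_delta_eq_sum hδ hz hP hform, dualTriple_tmul,
      dualDistrib_delta_eq_sum_left hz hP hform hf, he]
  have h₂ : dualTriple (e a) (e b) f (TensorProduct.map δ LinearMap.id (δ v)) = 0 := by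
    simp [map_id_delta_eq_sum hδ hz hP hform, dualTriple_tmul, hf _ (hz _)]
  have h₃ : dualTriple (e b) f (e a) (TensorProduct.map δ LinearMap.id (δ v))
      = - f (D b (D a v) : N) := by
    simp [map_id_delta_eq_sum hδ hz hP hform, dualTriple_tmul,
      dualDistrib_delta_eq_sum_right hz hP hform _ hf, he]
  have := dualTriple_cyclic_sum_eq_zero hcoJ f (e a) (e b)
  rw [h₁, h₂, h₃] at this
  linear_combination this

end NearlyCoboundary

lemma Module.Basis.repr_eq_zero_of_mem_span_image {R M ι : Type*} [Semiring R]
    [AddCommMonoid M] [Module R M] (B : Basis ι R M) {s : Set ι} {x : M}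
    (hx : x ∈ Submodule.span R (B '' s)) {i : ι} (hi : i ∉ s) : B.repr x i = 0 :=
  Finsupp.notMem_support_iff.mp fun h => hi (B.mem_span_image.mp hx h)

theorem stmt15_general (k V A N : Type*) [Field k]
    [Fintype A] [DecidableEq A]
    [LieRing N] [LieAlgebra k N]
    (B : Module.Basis (V ⊕ A) k N)
    (W Z : Submodule k N)
    (hW : W = Submodule.span k (Set.range fun i : V => B (Sum.inl i)))
    (hZ : Z = Submodule.span k (Set.range fun a : A => B (Sum.inr a)))
    -- δ is a Lie bialgebra structure on n:
    (δ : N →ₗ[k] N ⊗[k] N)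
    (hcoJ : ∀ x, (TensorProduct.map δ LinearMap.id) (δ x)
        + tCyc k N ((TensorProduct.map δ LinearMap.id) (δ x))
        + tCyc k N (tCyc k N ((TensorProduct.map δ LinearMap.id) (δ x))) = 0)
    -- δ is nearly coboundary:
    (hnc : ∀ z ∈ Z, δ z = 0)
    -- decomposition δ(v) = Σ_α D_α(v)∧α + Φ*(v) on W:
    (D : A → (W →ₗ[k] W))
    (P : W → N ⊗[k] N)
    (hP : ∀ v : W, P v ∈ tsub k N Z Z)
    (hform : ∀ v : W, δ (v : N)
      = ∑ a : A, (((D a v : W) : N) ⊗ₜ[k] B (Sum.inr a)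
          - B (Sum.inr a) ⊗ₜ[k] ((D a v : W) : N)) + P v) :
    ∀ a b : A, (D a).comp (D b) = (D b).comp (D a) := by
  intro a b
  ext v
  have hZ_inl (x : N) (hx : x ∈ Z) (i : V) : B.repr x (Sum.inl i) = 0 := by
    rw [hZ, ← Function.comp_def, Set.range_comp] at hx
    exact B.repr_eq_zero_of_mem_span_image hx (by simp)
  have hW_inr (x : N) (hx : x ∈ W) (c : A) : B.repr x (Sum.inr c) = 0 := by
    rw [hW, ← Function.comp_def, Set.range_comp] at hx
    exact B.repr_eq_zero_of_mem_span_image hx (by simp)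
  refine B.ext_elem fun j => ?_
  rcases j with i | c
  · exact apply_comp_apply_comm (z := fun a => B (Sum.inr a)) hnc
      (fun c => hZ ▸ Submodule.subset_span ⟨c, rfl⟩) hP hform (hcoJ v)
      (f := B.coord (Sum.inl i)) (hZ_inl · · i) (e := fun c => B.coord (Sum.inr c))
      (fun c d => by obtain rfl | hcd := eq_or_ne c d <;> simp [*]) a b
  · simp only [LinearMap.comp_apply, hW_inr _ (SetLike.coe_mem _)]

/-- let `G` be a finite simple graph in which every vertex has degree at
least 2, `n = n(G) = W ⊕ z` its graph algebra, and `δ` a nearly coboundary Lie bialgebra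
structure on `n` (`δ|_z = 0`), written as `δ(v) = Σ_α D_α(v)∧α + Φ*(v)` for `v ∈ W` with
`D_α : W → W` and `Φ* : W → Λ²z` (wedges modelled as antisymmetric tensors).  Then
`D_α D_β = D_β D_α` for all edges `α, β`. -/
theorem stmt15 (k V A N : Type*) [Field k] [CharZero k]
    [Fintype V] [Fintype A] [DecidableEq V] [DecidableEq A]
    [LieRing N] [LieAlgebra k N]
    (src tgt : A → V)
    (hloop : ∀ a, src a ≠ tgt a)
    (hsimple : ∀ a b : A,
      (src a = src b ∧ tgt a = tgt b) ∨ (src a = tgt b ∧ tgt a = src b) → a = b)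
    (B : Module.Basis (V ⊕ A) k N)
    (hbz : ∀ (a : A) (x : N), ⁅B (Sum.inr a), x⁆ = 0)
    (hbe : ∀ a : A, ⁅B (Sum.inl (src a)), B (Sum.inl (tgt a))⁆ = B (Sum.inr a))
    (hbe0 : ∀ i j : V,
      (∀ a : A, ¬((src a = i ∧ tgt a = j) ∨ (src a = j ∧ tgt a = i))) →
      ⁅B (Sum.inl i), B (Sum.inl j)⁆ = 0)
    (hdeg : ∀ e : V, 2 ≤ deg src tgt e)
    (W Z : Submodule k N)
    (hW : W = Submodule.span k (Set.range fun i : V => B (Sum.inl i)))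
    (hZ : Z = Submodule.span k (Set.range fun a : A => B (Sum.inr a)))
    -- δ is a Lie bialgebra structure on n:
    (δ : N →ₗ[k] N ⊗[k] N)
    (hanti : ∀ x, TensorProduct.comm k N N (δ x) = - δ x)
    (hcoJ : ∀ x, (TensorProduct.map δ LinearMap.id) (δ x)
        + tCyc k N ((TensorProduct.map δ LinearMap.id) (δ x))
        + tCyc k N (tCyc k N ((TensorProduct.map δ LinearMap.id) (δ x))) = 0)
    (hcoc : ∀ x y, δ ⁅x, y⁆ = tAct k N x (δ y) - tAct k N y (δ x))
    -- δ is nearly coboundary: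
    (hnc : ∀ z ∈ Z, δ z = 0)
    -- decomposition δ(v) = Σ_α D_α(v)∧α + Φ*(v) on W:
    (D : A → (W →ₗ[k] W))
    (P : W → N ⊗[k] N)
    (hP : ∀ v : W, P v ∈ tsub k N Z Z)
    (hform : ∀ v : W, δ (v : N)
      = ∑ a : A, (((D a v : W) : N) ⊗ₜ[k] B (Sum.inr a)
          - B (Sum.inr a) ⊗ₜ[k] ((D a v : W) : N)) + P v) :
    ∀ a b : A, (D a).comp (D b) = (D b).comp (D a) :=
  stmt15_general k V A N B W Z hW hZ δ hcoJ hnc D P hP hform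
end
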